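/- arXiv:2309.01695 — 5 statements merged into one kernel-verified Lean document; each statement's English description precedes it below -/
import Mathlib

section
/- For all complex numbers u and v, the absolute value of the imaginary part of (u log|u| - v log|v|) times (conj(u) - conj(v)) is at most |u - v|^2, where by convention z log|z| = 0 when z = 0. -/
lemma aux_sqrt_mul_log_sub_le (a b : ℝ) (hb : 0 < b) (hba : b ≤ a) :
    Real.sqrt (a*b) * (Real.log a - Real.log b) ≤ a - b := by
  have ha : 0 < a := hb.trans_le hba
  set t : ℝ := Real.sqrt a / Real.sqrt b with ht
  have hsb : 0 < Real.sqrt b := Real.sqrt_pos.2 hb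
  have hsa : 0 < Real.sqrt a := Real.sqrt_pos.2 ha
  have htpos : 0 < t := div_pos hsa hsb
  have ht1 : 1 ≤ t := by
    rw [le_div_iff₀ hsb, one_mul]
    exact Real.sqrt_le_sqrt hba
  have hlogt : 0 ≤ Real.log t := Real.log_nonneg ht1
  have hkey : Real.log t ≤ (t - t⁻¹) / 2 := by
    rw [← Real.sinh_log htpos]
    exact Real.self_le_sinh_iff.2 hlogt
  have hlog2 : Real.log t = (Real.log a - Real.log b) / 2 := by
    rw [ht, Real.log_div (ne_of_gt hsa) (ne_of_gt hsb), Real.log_sqrt ha.le,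
      Real.log_sqrt hb.le]
    ring
  have hsab : Real.sqrt (a*b) = Real.sqrt a * Real.sqrt b := Real.sqrt_mul ha.le b
  have h1 : Real.sqrt (a*b) * (t - t⁻¹) = a - b := by
    rw [hsab, ht, inv_div]
    field_simp
    linear_combination Real.mul_self_sqrt ha.le - Real.mul_self_sqrt hb.le
  have := mul_le_mul_of_nonneg_left hkey (Real.sqrt_nonneg (a*b))
  rw [hlog2] at this
  nlinarith [this, h1]

lemma aux_mul_log_sub_sq_le (a b : ℝ) (hb : 0 < b) (hba : b ≤ a) :
    a * b * (Real.log a - Real.log b)^2 ≤ (a - b)^2 := by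
  have ha : 0 < a := hb.trans_le hba
  have h := aux_sqrt_mul_log_sub_le a b hb hba
  have hL : 0 ≤ Real.log a - Real.log b := by
    have := Real.log_le_log hb hba
    linarith
  have hsq : (Real.sqrt (a*b) * (Real.log a - Real.log b))^2 ≤ (a-b)^2 := by
    apply sq_le_sq' _ h
    nlinarith [mul_nonneg (Real.sqrt_nonneg (a*b)) hL]
  rw [mul_pow, Real.sq_sqrt (by positivity : (0:ℝ) ≤ a*b)] at hsq
  exact hsq

lemma aux_core (a b c s : ℝ) (hb : 0 < b) (hba : b ≤ a) (h : c^2 + s^2 = (a*b)^2) :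
    |(Real.log b - Real.log a) * s| ≤ a^2 + b^2 - 2*c := by
  have ha : 0 < a := hb.trans_le hba
  have hab : 0 < a*b := by positivity
  have hc : c ≤ a*b := by nlinarith [sq_nonneg s]
  have hs2 : s^2 ≤ 2*(a*b)*(a*b - c) := by nlinarith [sq_nonneg (a*b - c)]
  have hL : 0 ≤ Real.log a - Real.log b := by
    have := Real.log_le_log hb hba
    linarith
  set L := Real.log a - Real.log b with hLdef
  set m := |s| with hm
  have hm0 : 0 ≤ m := abs_nonneg s
  have hm2 : m^2 = s^2 := sq_abs s
  have habs : |(Real.log b - Real.log a) * s| = L * m := by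
    rw [abs_mul, hm, hLdef, abs_sub_comm (Real.log b), abs_of_nonneg hL]
  rw [habs]
  have hL2 : a*b*L^2 ≤ (a-b)^2 := aux_mul_log_sub_sq_le a b hb hba
  have hR0 : 0 ≤ a^2 + b^2 - 2*c := by nlinarith
  have hkey : (L*m)^2 ≤ (a^2+b^2-2*c)^2 := by
    have h1 : a*b*(L^2*m^2) ≤ (a-b)^2 * m^2 := by nlinarith [sq_nonneg m]
    have h2 : (a-b)^2 * m^2 ≤ (a-b)^2 * (2*(a*b)*(a*b-c)) := by
      apply mul_le_mul_of_nonneg_left _ (sq_nonneg _)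
      rw [hm2]; exact hs2
    have h3 : L^2*m^2 ≤ 2*(a-b)^2*(a*b-c) := by
      rw [← mul_le_mul_iff_right₀ hab]
      nlinarith
    have h4 : 2*(a-b)^2*(a*b-c) ≤ (a^2+b^2-2*c)^2 := by
      nlinarith [sq_nonneg (a-b), mul_nonneg (sq_nonneg (a-b)) (by linarith : (0:ℝ) ≤ a*b - c), sq_nonneg ((a-b)^2 - 2*(a*b-c))]
    calc (L*m)^2 = L^2*m^2 := by ring
    _ ≤ 2*(a-b)^2*(a*b-c) := h3
    _ ≤ (a^2+b^2-2*c)^2 := h4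
  exact le_of_pow_le_pow_left₀ two_ne_zero hR0 hkey

lemma aux_general (a b c s : ℝ) (ha : 0 ≤ a) (hb : 0 ≤ b) (h : c^2 + s^2 = (a*b)^2) :
    |(Real.log b - Real.log a) * s| ≤ a^2 + b^2 - 2*c := by
  rcases eq_or_lt_of_le ha with ha0 | ha
  · subst ha0
    have h' : c^2 + s^2 = 0 := by simpa using h
    have hs : s = 0 := by nlinarith [sq_nonneg c, sq_nonneg s]
    have hc : c = 0 := by nlinarith [sq_nonneg s]
    simp [hs, hc]
    positivity
  rcases eq_or_lt_of_le hb with hb0 | hb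
  · subst hb0
    have h' : c^2 + s^2 = 0 := by simpa using h
    have hs : s = 0 := by nlinarith [sq_nonneg c, sq_nonneg s]
    have hc : c = 0 := by nlinarith [sq_nonneg s]
    simp [hs, hc]
    positivity
  rcases le_total b a with hba | hab
  · exact aux_core a b c s hb hba h
  · have := aux_core b a c s ha hab (by linarith [h])
    rw [show |(Real.log b - Real.log a) * s| = |(Real.log a - Real.log b) * s| by
        rw [abs_mul, abs_mul, abs_sub_comm]]
    linarith

/-- For all complex `u, v`,
`|Im[(u log|u| - v log|v|)(conj u - conj v)]| ≤ |u - v|^2`,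
with the convention `z log|z| = 0` at `z = 0` (automatic since `Real.log 0 = 0`). -/
theorem abs_im_mul_log_sub_le_sq (u v : ℂ) :
    |((u * (Real.log ‖u‖ : ℂ) - v * (Real.log ‖v‖ : ℂ)) *
        (starRingEnd ℂ u - starRingEnd ℂ v)).im| ≤ ‖u - v‖ ^ 2 := by
  set a := ‖u‖ with ha
  set b := ‖v‖ with hb
  set c := (u * starRingEnd ℂ v).re with hc
  set s := (u * starRingEnd ℂ v).im with hs
  have h1 : ((u * (Real.log a : ℂ) - v * (Real.log b : ℂ)) *
      (starRingEnd ℂ u - starRingEnd ℂ v)).im = (Real.log b - Real.log a) * s := by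
    simp only [Complex.sub_im, Complex.mul_im, Complex.mul_re, Complex.sub_re,
      Complex.conj_re, Complex.conj_im, Complex.ofReal_re, Complex.ofReal_im, hs,
      Complex.mul_im]
    ring
  have h2 : ‖u - v‖ ^ 2 = a^2 + b^2 - 2*c := by
    rw [Complex.sq_norm, Complex.normSq_sub, ha, hb, Complex.sq_norm, Complex.sq_norm]
  have h3 : c^2 + s^2 = (a*b)^2 := by
    have := Complex.sq_norm (u * starRingEnd ℂ v)
    rw [norm_mul, Complex.norm_conj, Complex.normSq_apply] at this
    rw [hc, hs]
    nlinarith [this]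
  rw [h1, h2]
  exact aux_general a b c s (norm_nonneg u) (norm_nonneg v) h3
end

section
/- For all complex numbers u, v and all real numbers ε, μ > 0, one has |Im[(u log(|u|+ε) - v log(|v|+μ))(conj(u) - conj(v))]| ≤ |u - v|^2 + |ε - μ| · |u - v|. -/
/-- For all complex `u, v` and reals `ε, μ > 0`,
`|Im[(u log(|u|+ε) - v log(|v|+μ))(conj u - conj v)]| ≤ |u-v|^2 + |ε-μ|·|u-v|`. -/
theorem abs_im_mul_log_add_eps_sub_le (u v : ℂ) (ε μ : ℝ) (hε : 0 < ε) (hμ : 0 < μ) :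
    |((u * (Real.log (‖u‖ + ε) : ℂ) - v * (Real.log (‖v‖ + μ) : ℂ)) *
        (starRingEnd ℂ u - starRingEnd ℂ v)).im| ≤
      ‖u - v‖ ^ 2 + |ε - μ| * ‖u - v‖ := by
  set a := Real.log (‖u‖ + ε) with ha
  set b := Real.log (‖v‖ + μ) with hb
  set d := ‖u - v‖ with hd
  have hd0 : 0 ≤ d := norm_nonneg _
  set m := min (‖u‖) (‖v‖) with hm
  have hm0 : 0 ≤ m := le_min (norm_nonneg _) (norm_nonneg _)
  -- Step 1: the imaginary part
  have him : ((u * (a : ℂ) - v * (b : ℂ)) * (starRingEnd ℂ u - starRingEnd ℂ v)).im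
      = (b - a) * (u * starRingEnd ℂ v).im := by
    simp only [Complex.mul_im, Complex.sub_im, Complex.sub_re, Complex.mul_re,
      Complex.conj_re, Complex.conj_im, Complex.ofReal_re, Complex.ofReal_im]
    ring
  rw [him, abs_mul]
  -- Step 2: |Im (u * conj v)| ≤ m * d
  have h2 : |(u * starRingEnd ℂ v).im| ≤ m * d := by
    rcases le_total (‖u‖) (‖v‖) with h | h
    · have heq : (u * starRingEnd ℂ v).im = (u * starRingEnd ℂ (v - u)).im := by
        simp only [Complex.mul_im, Complex.conj_re, Complex.conj_im, Complex.sub_re,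
          Complex.sub_im]
        ring
      rw [heq, hm, min_eq_left h]
      calc |(u * starRingEnd ℂ (v - u)).im| ≤ ‖u * starRingEnd ℂ (v - u)‖ :=
            Complex.abs_im_le_norm _
        _ = ‖u‖ * d := by
            rw [norm_mul, Complex.norm_conj, hd, norm_sub_rev v u]
    · have heq : (u * starRingEnd ℂ v).im = ((u - v) * starRingEnd ℂ v).im := by
        simp only [Complex.mul_im, Complex.conj_re, Complex.conj_im, Complex.sub_re,
          Complex.sub_im]
        ring
      rw [heq, hm, min_eq_right h]
      calc |((u - v) * starRingEnd ℂ v).im| ≤ ‖(u - v) * starRingEnd ℂ v‖ :=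
            Complex.abs_im_le_norm _
        _ = d * ‖v‖ := by rw [norm_mul, Complex.norm_conj]
        _ = ‖v‖ * d := mul_comm _ _
  -- Step 3: |a - b| * m ≤ |(|u|+ε) - (|v|+μ)|
  set x := ‖u‖ + ε with hx'
  set y := ‖v‖ + μ with hy'
  have hx : 0 < x := add_pos_of_nonneg_of_pos (norm_nonneg _) hε
  have hy : 0 < y := add_pos_of_nonneg_of_pos (norm_nonneg _) hμ
  have hmx : m ≤ x := le_trans (min_le_left _ _) (le_add_of_nonneg_right hε.le)
  have hmy : m ≤ y := le_trans (min_le_right _ _) (le_add_of_nonneg_right hμ.le)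
  have key : |a - b| * m ≤ |x - y| := by
    rcases le_total y x with h | h
    · have hlog : a - b ≤ (x - y) / y := by
        have h1 : Real.log (x / y) ≤ x / y - 1 := Real.log_le_sub_one_of_pos (div_pos hx hy)
        rw [Real.log_div hx.ne' hy.ne'] at h1
        calc a - b ≤ x / y - 1 := h1
          _ = (x - y) / y := by field_simp
      have hab : 0 ≤ a - b := by
        have := Real.log_le_log hy h
        linarith
      rw [abs_of_nonneg hab, abs_of_nonneg (by linarith : (0:ℝ) ≤ x - y)]
      calc (a - b) * m ≤ ((x - y) / y) * y :=
            mul_le_mul hlog hmy hm0 (div_nonneg (by linarith) hy.le)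
        _ = x - y := by field_simp
    · have hlog : b - a ≤ (y - x) / x := by
        have h1 : Real.log (y / x) ≤ y / x - 1 := Real.log_le_sub_one_of_pos (div_pos hy hx)
        rw [Real.log_div hy.ne' hx.ne'] at h1
        calc b - a ≤ y / x - 1 := h1
          _ = (y - x) / x := by field_simp
      have hab : 0 ≤ b - a := by
        have := Real.log_le_log hx h
        linarith
      rw [abs_sub_comm a b, abs_of_nonneg hab, abs_sub_comm x y,
        abs_of_nonneg (by linarith : (0:ℝ) ≤ y - x)]
      calc (b - a) * m ≤ ((y - x) / x) * x :=
            mul_le_mul hlog hmx hm0 (div_nonneg (by linarith) hx.le)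
        _ = y - x := by field_simp
  -- Step 4: |x - y| ≤ d + |ε - μ|
  have hxy : |x - y| ≤ d + |ε - μ| := by
    have h1 : |‖u‖ - ‖v‖| ≤ d := abs_norm_sub_norm_le u v
    calc |x - y| = |(‖u‖ - ‖v‖) + (ε - μ)| := by rw [hx', hy']; ring_nf
      _ ≤ |‖u‖ - ‖v‖| + |ε - μ| := abs_add_le _ _
      _ ≤ d + |ε - μ| := by linarith
  -- Conclude
  have hba : |b - a| = |a - b| := abs_sub_comm b a
  calc |b - a| * |(u * starRingEnd ℂ v).im| ≤ |a - b| * (m * d) := by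
        rw [hba]; exact mul_le_mul_of_nonneg_left h2 (abs_nonneg _)
    _ = (|a - b| * m) * d := by ring
    _ ≤ (d + |ε - μ|) * d := mul_le_mul_of_nonneg_right (key.trans hxy) hd0
    _ = d ^ 2 + |ε - μ| * d := by ring
end

section
/- For every α ∈ (0,1) there exists a constant C(α) > 0 such that for all complex numbers u, v and all ε ∈ (0,1): |v log(|v|+ε) - u log|u|| ≤ ε + |u - v| + C(α)(1 + |u|^{1-α} log⁺|u| + |v|^{1-α} log⁺|v|) |u - v|^α, where u log|u| is interpreted as 0 when u = 0. -/
private lemma aux_xlog (α : ℝ) (hα1 : α < 1) {x : ℝ} (hx0 : 0 < x) (hx1 : x ≤ 1) :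
    x ^ (1 - α) * |Real.log x| ≤ 1 / (Real.exp 1 * (1 - α)) := by
  have h1α : 0 < 1 - α := by linarith
  have hlog : Real.log x ≤ 0 := Real.log_nonpos hx0.le hx1
  rw [abs_of_nonpos hlog]
  set s := (1 - α) * (-Real.log x) with hs
  have hs0 : 0 ≤ s := mul_nonneg h1α.le (by linarith)
  have hxe : x ^ (1 - α) = Real.exp (-s) := by
    have hns : -s = Real.log x * (1 - α) := by rw [hs]; ring
    rw [Real.rpow_def_of_pos hx0, hns]
  have hkey : s * Real.exp (-s) ≤ Real.exp (-1) := by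
    have h1 : s ≤ Real.exp (s - 1) := by
      have := Real.add_one_le_exp (s - 1); linarith
    calc s * Real.exp (-s) ≤ Real.exp (s - 1) * Real.exp (-s) :=
          mul_le_mul_of_nonneg_right h1 (Real.exp_nonneg _)
      _ = Real.exp (-1) := by rw [← Real.exp_add]; ring_nf
  have hneg : -Real.log x = s / (1 - α) := by
    rw [hs, mul_comm, mul_div_assoc, div_self (ne_of_gt h1α), mul_one]
  rw [hxe, hneg]
  have heq : Real.exp (-s) * (s / (1 - α)) = (s * Real.exp (-s)) / (1 - α) := by ring
  rw [heq]
  have h2 : (s * Real.exp (-s)) / (1 - α) ≤ Real.exp (-1) / (1 - α) := by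
    gcongr
  refine h2.trans (le_of_eq ?_)
  rw [Real.exp_neg]
  have he : Real.exp 1 > 0 := Real.exp_pos 1
  field_simp

private lemma core_holder (α : ℝ) (hα0 : 0 < α) (hα1 : α < 1)
    (u v : ℂ) (hab : ‖u‖ ≤ ‖v‖) :
    ‖v * (Real.log (‖v‖) : ℂ) - u * (Real.log (‖u‖) : ℂ)‖ ≤
      ‖u - v‖ +
        (2 / (Real.exp 1 * (1 - α)) + 2) *
          (1 + ‖v‖ ^ (1 - α) * max (Real.log (‖v‖)) 0) *
          ‖u - v‖ ^ α := by
  have h1α : 0 < 1 - α := by linarith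
  set a := ‖u‖ with ha
  set b := ‖v‖ with hb
  set d := ‖u - v‖ with hd
  set C := 2 / (Real.exp 1 * (1 - α)) + 2 with hC
  clear_value a b d C
  have ha0 : 0 ≤ a := by rw [ha]; exact norm_nonneg u
  have hb0 : 0 ≤ b := by rw [hb]; exact norm_nonneg v
  have hd0 : 0 ≤ d := by rw [hd]; exact norm_nonneg _
  have hC2 : 2 ≤ C := by
    have h := div_pos two_pos (mul_pos (Real.exp_pos 1) h1α)
    linarith [hC, h]
  have hC0 : 0 < C := by linarith
  have hX0 : 0 ≤ b ^ (1 - α) * max (Real.log b) 0 :=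
    mul_nonneg (Real.rpow_nonneg hb0 _) (le_max_right _ _)
  have hdα0 : 0 ≤ d ^ α := Real.rpow_nonneg hd0 _
  -- decomposition
  have hdecomp : v * (Real.log b : ℂ) - u * (Real.log a : ℂ)
      = (v - u) * (Real.log b : ℂ) + u * ((Real.log b : ℂ) - (Real.log a : ℂ)) := by ring
  have htri : ‖v * (Real.log b : ℂ) - u * (Real.log a : ℂ)‖
      ≤ d * |Real.log b| + a * |Real.log b - Real.log a| := by
    rw [hdecomp]
    refine (norm_add_le _ _).trans ?_
    rw [norm_mul, norm_mul]
    have h1 : ‖v - u‖ = d := by rw [hd, norm_sub_rev]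
    have h2 : ‖(Real.log b : ℂ)‖ = |Real.log b| := by rw [Complex.norm_real, Real.norm_eq_abs]
    have h3 : ((Real.log b : ℂ)) - ((Real.log a : ℂ)) = ((Real.log b - Real.log a : ℝ) : ℂ) := by
      push_cast; ring
    rw [h1, h2, h3, Complex.norm_real, Real.norm_eq_abs, ← ha]
  -- bound T2
  have hT2 : a * |Real.log b - Real.log a| ≤ d := by
    rcases eq_or_lt_of_le ha0 with h | h
    · rw [← h]; simpa using hd0
    · have hbpos : 0 < b := lt_of_lt_of_le h hab
      have hmono : Real.log a ≤ Real.log b := Real.log_le_log h hab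
      rw [abs_of_nonneg (by linarith)]
      have hlogdiv : Real.log b - Real.log a = Real.log (b / a) := by
        rw [Real.log_div (ne_of_gt hbpos) (ne_of_gt h)]
      have hle : Real.log (b / a) ≤ b / a - 1 :=
        Real.log_le_sub_one_of_pos (div_pos hbpos h)
      have : a * (Real.log b - Real.log a) ≤ b - a := by
        rw [hlogdiv]
        calc a * Real.log (b / a) ≤ a * (b / a - 1) :=
              mul_le_mul_of_nonneg_left hle ha0
          _ = b - a := by field_simp
      refine this.trans ?_
      calc b - a ≤ ‖v - u‖ := by
            rw [hb, ha]
            exact norm_sub_norm_le v u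
        _ = d := by rw [hd, norm_sub_rev]
  -- bound T1
  have hT1 : d * |Real.log b| ≤ C * (1 + b ^ (1 - α) * max (Real.log b) 0) * d ^ α := by
    rcases eq_or_lt_of_le hd0 with h | hdpos
    · rw [← h]
      have : (0:ℝ) ^ α = 0 := Real.zero_rpow (ne_of_gt hα0)
      rw [this]
      simp
    · have hd2b : d ≤ 2 * b := by
        calc d = ‖u - v‖ := hd
          _ ≤ ‖u‖ + ‖v‖ := norm_sub_le u v
          _ ≤ 2 * b := by rw [← ha, ← hb] at *; linarith
      have hbpos : 0 < b := by nlinarith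
      have hsplit : d ^ α * d ^ (1 - α) = d := by
        rw [← Real.rpow_add hdpos]; norm_num
      have hdpow : d ^ (1 - α) ≤ (2 * b) ^ (1 - α) :=
        Real.rpow_le_rpow hd0 hd2b h1α.le
      have h2b : (2 * b) ^ (1 - α) = 2 ^ (1 - α) * b ^ (1 - α) :=
        Real.mul_rpow (by norm_num) hb0
      have h2le : (2:ℝ) ^ (1 - α) ≤ 2 := by
        calc (2:ℝ) ^ (1 - α) ≤ 2 ^ (1:ℝ) :=
              Real.rpow_le_rpow_of_exponent_le (by norm_num) (by linarith)
          _ = 2 := Real.rpow_one 2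
      have key : (2 * b) ^ (1 - α) * |Real.log b|
          ≤ C * (1 + b ^ (1 - α) * max (Real.log b) 0) := by
        rcases le_or_gt b 1 with hb1 | hb1
        · have hx := aux_xlog α hα1 hbpos hb1
          have : (2 * b) ^ (1 - α) * |Real.log b|
              ≤ 2 * (b ^ (1 - α) * |Real.log b|) := by
            rw [h2b]
            have : 2 ^ (1 - α) * b ^ (1 - α) * |Real.log b|
                = 2 ^ (1 - α) * (b ^ (1 - α) * |Real.log b|) := by ring
            rw [this]
            exact mul_le_mul_of_nonneg_right h2le
              (mul_nonneg (Real.rpow_nonneg hb0 _) (abs_nonneg _))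
          refine this.trans ?_
          have h2x : 2 * (b ^ (1 - α) * |Real.log b|) ≤ 2 / (Real.exp 1 * (1 - α)) := by
            rw [div_eq_mul_inv, mul_comm (2:ℝ) (Real.exp 1 * (1-α))⁻¹, ← mul_comm (2:ℝ)]
            calc 2 * (b ^ (1 - α) * |Real.log b|) ≤ 2 * (1 / (Real.exp 1 * (1 - α))) := by
                  exact mul_le_mul_of_nonneg_left hx (by norm_num)
              _ = 2 * (Real.exp 1 * (1 - α))⁻¹ := by rw [one_div]
          refine h2x.trans ?_
          calc 2 / (Real.exp 1 * (1 - α)) ≤ C := by rw [hC]; linarith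
            _ = C * 1 := by ring
            _ ≤ C * (1 + b ^ (1 - α) * max (Real.log b) 0) := by
                exact mul_le_mul_of_nonneg_left (by linarith) hC0.le
        · have hlogb : 0 ≤ Real.log b := Real.log_nonneg hb1.le
          have hmax : max (Real.log b) 0 = Real.log b := max_eq_left hlogb
          rw [abs_of_nonneg hlogb, h2b, hmax]
          have hX := hX0
          rw [hmax] at hX
          calc 2 ^ (1 - α) * b ^ (1 - α) * Real.log b
              = 2 ^ (1 - α) * (b ^ (1 - α) * Real.log b) := by ring
            _ ≤ 2 * (b ^ (1 - α) * Real.log b) :=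
                mul_le_mul_of_nonneg_right h2le
                  (mul_nonneg (Real.rpow_nonneg hb0 _) hlogb)
            _ ≤ C * (b ^ (1 - α) * Real.log b) := mul_le_mul_of_nonneg_right hC2 hX
            _ ≤ C * (1 + b ^ (1 - α) * Real.log b) :=
                mul_le_mul_of_nonneg_left (by linarith) hC0.le
      calc d * |Real.log b| = d ^ α * (d ^ (1 - α) * |Real.log b|) := by
            conv_lhs => rw [← hsplit]
            ring
        _ ≤ d ^ α * ((2 * b) ^ (1 - α) * |Real.log b|) := by
            exact mul_le_mul_of_nonneg_left
              (mul_le_mul_of_nonneg_right hdpow (abs_nonneg _)) hdα0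
        _ ≤ d ^ α * (C * (1 + b ^ (1 - α) * max (Real.log b) 0)) :=
            mul_le_mul_of_nonneg_left key hdα0
        _ = C * (1 + b ^ (1 - α) * max (Real.log b) 0) * d ^ α := by ring
  calc ‖v * (Real.log b : ℂ) - u * (Real.log a : ℂ)‖
      ≤ d * |Real.log b| + a * |Real.log b - Real.log a| := htri
    _ ≤ C * (1 + b ^ (1 - α) * max (Real.log b) 0) * d ^ α + d := by linarith
    _ = d + C * (1 + b ^ (1 - α) * max (Real.log b) 0) * d ^ α := by ring

/-- For every `α ∈ (0,1)` there is `C(α) > 0` such that for all complex `u, v` and `ε ∈ (0,1)`: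
`|v log(|v|+ε) - u log|u|| ≤ ε + |u-v| + C(α)(1 + |u|^{1-α} log⁺|u| + |v|^{1-α} log⁺|v|)|u-v|^α`,
with `u log|u| = 0` at `u = 0` (automatic since `Real.log 0 = 0`). -/
theorem abs_log_approx_holder (α : ℝ) (hα : α ∈ Set.Ioo (0:ℝ) 1) :
    ∃ C : ℝ, 0 < C ∧ ∀ (u v : ℂ) (ε : ℝ), ε ∈ Set.Ioo (0:ℝ) 1 →
      ‖v * (Real.log (‖v‖ + ε) : ℂ) -
          u * (Real.log (‖u‖) : ℂ)‖ ≤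
        ε + ‖u - v‖ +
          C * (1 + ‖u‖ ^ (1 - α) * max (Real.log (‖u‖)) 0
                 + ‖v‖ ^ (1 - α) * max (Real.log (‖v‖)) 0) *
            ‖u - v‖ ^ α := by
  obtain ⟨hα0, hα1⟩ := hα
  have h1α : 0 < 1 - α := by linarith
  refine ⟨2 / (Real.exp 1 * (1 - α)) + 2, ?_, ?_⟩
  · have : 0 < 2 / (Real.exp 1 * (1 - α)) :=
      div_pos two_pos (mul_pos (Real.exp_pos 1) h1α)
    linarith
  intro u v ε hε
  obtain ⟨hε0, hε1⟩ := hε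
  set C := 2 / (Real.exp 1 * (1 - α)) + 2 with hC
  set a := ‖u‖ with ha
  set b := ‖v‖ with hb
  set d := ‖u - v‖ with hd
  clear_value C a b d
  have ha0 : 0 ≤ a := by rw [ha]; exact norm_nonneg u
  have hb0 : 0 ≤ b := by rw [hb]; exact norm_nonneg v
  have hd0 : 0 ≤ d := by rw [hd]; exact norm_nonneg _
  have hC0 : 0 < C := by
    have h := div_pos two_pos (mul_pos (Real.exp_pos 1) h1α)
    linarith [hC, h]
  have hA0 : 0 ≤ a ^ (1 - α) * max (Real.log a) 0 :=
    mul_nonneg (Real.rpow_nonneg ha0 _) (le_max_right _ _)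
  have hB0 : 0 ≤ b ^ (1 - α) * max (Real.log b) 0 :=
    mul_nonneg (Real.rpow_nonneg hb0 _) (le_max_right _ _)
  have hdα0 : 0 ≤ d ^ α := Real.rpow_nonneg hd0 _
  -- the ε-term
  have hepsterm : ‖v * (Real.log (b + ε) : ℂ) - v * (Real.log b : ℂ)‖ ≤ ε := by
    have heq : v * (Real.log (b + ε) : ℂ) - v * (Real.log b : ℂ)
        = v * ((Real.log (b + ε) - Real.log b : ℝ) : ℂ) := by push_cast; ring
    rw [heq, norm_mul, Complex.norm_real, Real.norm_eq_abs, ← hb]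
    rcases eq_or_lt_of_le hb0 with h | hbpos
    · rw [← h]; simpa using hε0.le
    · have hlogmono : Real.log b ≤ Real.log (b + ε) :=
        Real.log_le_log hbpos (by linarith)
      rw [abs_of_nonneg (by linarith)]
      have hlogdiv : Real.log (b + ε) - Real.log b = Real.log ((b + ε) / b) := by
        rw [Real.log_div (by positivity) (ne_of_gt hbpos)]
      have hle : Real.log ((b + ε) / b) ≤ (b + ε) / b - 1 :=
        Real.log_le_sub_one_of_pos (div_pos (by linarith) hbpos)
      calc b * (Real.log (b + ε) - Real.log b) ≤ b * ((b + ε) / b - 1) := by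
            rw [hlogdiv]; exact mul_le_mul_of_nonneg_left hle hb0
        _ = ε := by field_simp; ring
  -- the core term
  have hcore : ‖v * (Real.log b : ℂ) - u * (Real.log a : ℂ)‖
      ≤ d + C * (1 + a ^ (1 - α) * max (Real.log a) 0 + b ^ (1 - α) * max (Real.log b) 0)
          * d ^ α := by
    rcases le_total a b with hab | hab
    · rw [ha, hb] at hab
      have := core_holder α hα0 hα1 u v hab
      rw [← ha, ← hb, ← hd, ← hC] at this
      refine this.trans ?_
      have : C * (1 + b ^ (1 - α) * max (Real.log b) 0) * d ^ α
          ≤ C * (1 + a ^ (1 - α) * max (Real.log a) 0 + b ^ (1 - α) * max (Real.log b) 0)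
              * d ^ α := by
        refine mul_le_mul_of_nonneg_right ?_ hdα0
        exact mul_le_mul_of_nonneg_left (by linarith) hC0.le
      linarith
    · rw [ha, hb] at hab
      have h := core_holder α hα0 hα1 v u hab
      rw [← ha, ← hb] at h
      have heq1 : ‖u * (Real.log a : ℂ) - v * (Real.log b : ℂ)‖
          = ‖v * (Real.log b : ℂ) - u * (Real.log a : ℂ)‖ :=
        norm_sub_rev _ _
      have heq2 : ‖v - u‖ = d := by rw [hd, norm_sub_rev]
      rw [heq1, heq2, ← hC] at h
      refine h.trans ?_
      have : C * (1 + a ^ (1 - α) * max (Real.log a) 0) * d ^ α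
          ≤ C * (1 + a ^ (1 - α) * max (Real.log a) 0 + b ^ (1 - α) * max (Real.log b) 0)
              * d ^ α := by
        refine mul_le_mul_of_nonneg_right ?_ hdα0
        exact mul_le_mul_of_nonneg_left (by linarith) hC0.le
      linarith
  calc ‖v * (Real.log (b + ε) : ℂ) - u * (Real.log a : ℂ)‖
      ≤ ‖v * (Real.log (b + ε) : ℂ) - v * (Real.log b : ℂ)‖
        + ‖v * (Real.log b : ℂ) - u * (Real.log a : ℂ)‖ := by
        have : v * (Real.log (b + ε) : ℂ) - u * (Real.log a : ℂ)
            = (v * (Real.log (b + ε) : ℂ) - v * (Real.log b : ℂ))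
              + (v * (Real.log b : ℂ) - u * (Real.log a : ℂ)) := by ring
        rw [this]; exact norm_add_le _ _
    _ ≤ ε + (d + C * (1 + a ^ (1 - α) * max (Real.log a) 0
          + b ^ (1 - α) * max (Real.log b) 0) * d ^ α) := by
        exact add_le_add hepsterm hcore
    _ = ε + d + C * (1 + a ^ (1 - α) * max (Real.log a) 0
          + b ^ (1 - α) * max (Real.log b) 0) * d ^ α := by ring
end

section
/- Let d ≥ 1 and f_ρ(x) = ⟨x⟩^{-d/2}(log⟨x⟩)^{-ρ}. If 1/2 < ρ ≤ 1 then ∫_{|x|≥2} |f_ρ(x)|² |log(|f_ρ(x)|²)| dx = ∞, while if ρ > 1 this integral is finite. Consequently f_ρ ∈ L²(ℝ^d) but |f_ρ|² log(|f_ρ|²) ∉ L¹(ℝ^d) when 1/2 < ρ ≤ 1. -/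
open MeasureTheory Set Function Metric
open scoped ENNReal

variable {E : Type*} [NormedAddCommGroup E] [NormedSpace ℝ E] [MeasurableSpace E]
  [Nontrivial E] [FiniteDimensional ℝ E] [BorelSpace E]

lemma lintegral_fun_norm_addHaar' (μ : Measure E) [μ.IsAddHaarMeasure] (f : ℝ → ℝ≥0∞)
    (hf : Measurable f) :
    ∫⁻ x, f ‖x‖ ∂μ = μ.toSphere univ *
      ∫⁻ r in Ioi (0:ℝ), ENNReal.ofReal (r ^ (Module.finrank ℝ E - 1)) * f r := by
  have hmeas : Measurable fun r : Ioi (0:ℝ) => f ↑r := hf.comp measurable_subtype_coe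
  calc
    ∫⁻ x, f ‖x‖ ∂μ = ∫⁻ x : ({(0)}ᶜ : Set E), f ‖x.1‖ ∂(μ.comap (↑)) := by
      rw [lintegral_subtype_comap (measurableSet_singleton _).compl fun x ↦ f ‖x‖,
        MeasureTheory.restrict_compl_singleton]
    _ = ∫⁻ x : sphere (0 : E) 1 × Ioi (0 : ℝ),
          ((f ∘ Subtype.val) ∘ Prod.snd) x
          ∂μ.toSphere.prod (.volumeIoiPow (Module.finrank ℝ E - 1)) := by
      have h := μ.measurePreserving_homeomorphUnitSphereProd.lintegral_comp
        ((hf.comp measurable_subtype_coe).comp measurable_snd)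
      simp only [comp_def, homeomorphUnitSphereProd_apply_snd_coe] at h
      exact h
    _ = μ.toSphere univ * ∫⁻ r : Ioi (0:ℝ), f r ∂(.volumeIoiPow (Module.finrank ℝ E - 1)) := by
      rw [lintegral_prod _ (((hf.comp measurable_subtype_coe).comp measurable_snd).aemeasurable)]
      simp only [comp_apply, lintegral_const]
      exact mul_comm _ _
    _ = _ := by
      rw [Measure.volumeIoiPow, lintegral_withDensity_eq_lintegral_mul _
        ((measurable_subtype_coe.pow_const _).ennreal_ofReal) hmeas,
        ← lintegral_subtype_comap measurableSet_Ioi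
          (fun r : ℝ => ENNReal.ofReal (r ^ (Module.finrank ℝ E - 1)) * f r)]
      rfl

lemma integrableOn_fun_norm_iff (μ : Measure E) [μ.IsAddHaarMeasure] (f : ℝ → ℝ)
    (hf : Measurable f) (h0 : ∀ r, 0 ≤ f r) {c : ℝ} (hc : 0 < c) :
    IntegrableOn (fun x : E => f ‖x‖) {x : E | c ≤ ‖x‖} μ ↔
      IntegrableOn (fun r : ℝ => r ^ (Module.finrank ℝ E - 1) * f r) (Ioi c) volume := by
  have hSm : MeasurableSet {x : E | c ≤ ‖x‖} :=
    (isClosed_le continuous_const continuous_norm).measurableSet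
  have hL : ∫⁻ x in {x : E | c ≤ ‖x‖}, ENNReal.ofReal (f ‖x‖) ∂μ =
      μ.toSphere univ * ∫⁻ r in Ioi c, ENNReal.ofReal (r ^ (Module.finrank ℝ E - 1) * f r) := by
    have key : ∫⁻ x in {x : E | c ≤ ‖x‖}, ENNReal.ofReal (f ‖x‖) ∂μ =
        ∫⁻ x, (Ici c).indicator (fun r => ENNReal.ofReal (f r)) ‖x‖ ∂μ := by
      rw [← lintegral_indicator hSm]
      refine lintegral_congr fun x => ?_
      by_cases hx : c ≤ ‖x‖ <;> simp [hx, Set.indicator]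
    rw [key, lintegral_fun_norm_addHaar' μ _ (hf.ennreal_ofReal.indicator measurableSet_Ici)]
    congr 1
    calc
      ∫⁻ r in Ioi (0:ℝ), ENNReal.ofReal (r ^ (Module.finrank ℝ E - 1)) *
          (Ici c).indicator (fun r => ENNReal.ofReal (f r)) r
        = ∫⁻ r in Ioi (0:ℝ), (Ici c).indicator
            (fun r => ENNReal.ofReal (r ^ (Module.finrank ℝ E - 1)) * ENNReal.ofReal (f r)) r := by
          refine lintegral_congr fun r => ?_
          by_cases hr : r ∈ Ici c <;> simp [hr, Set.indicator]
      _ = ∫⁻ r in Ici c ∩ Ioi 0, ENNReal.ofReal (r ^ (Module.finrank ℝ E - 1)) *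
            ENNReal.ofReal (f r) := by
          rw [lintegral_indicator measurableSet_Ici, Measure.restrict_restrict measurableSet_Ici]
      _ = ∫⁻ r in Ioi c, ENNReal.ofReal (r ^ (Module.finrank ℝ E - 1) * f r) := by
          have h1 : Ici c ∩ Ioi 0 = Ici c := inter_eq_left.2 fun r hr => lt_of_lt_of_le hc hr
          rw [h1, ← Measure.restrict_congr_set Ioi_ae_eq_Ici]
          refine setLIntegral_congr_fun measurableSet_Ioi (fun r hr => ?_)
          rw [ENNReal.ofReal_mul (pow_nonneg (le_of_lt (hc.trans hr)) _)]
  have hκ0 : μ.toSphere univ ≠ 0 := by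
    rw [Measure.toSphere_apply_univ]
    refine mul_ne_zero (by simpa using Module.finrank_pos.ne') ?_
    exact (measure_ball_pos μ 0 one_pos).ne'
  have hκtop : μ.toSphere univ ≠ ⊤ := measure_ne_top _ _
  constructor
  · rintro ⟨-, hfin⟩
    refine ⟨(measurable_id.pow_const _ |>.mul hf).aestronglyMeasurable, ?_⟩
    rw [hasFiniteIntegral_iff_ofReal ((ae_restrict_iff' measurableSet_Ioi).2 (ae_of_all _
      fun r hr => mul_nonneg (pow_nonneg (hc.trans hr).le _) (h0 r)))]
    rw [hasFiniteIntegral_iff_ofReal (ae_of_all _ fun x => h0 _), hL] at hfin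
    exact ENNReal.lt_top_of_mul_ne_top_right hfin.ne hκ0
  · rintro ⟨-, hfin⟩
    refine ⟨((hf.comp measurable_norm).aestronglyMeasurable), ?_⟩
    rw [hasFiniteIntegral_iff_ofReal (ae_of_all _ fun x => h0 _), hL]
    rw [hasFiniteIntegral_iff_ofReal ((ae_restrict_iff' measurableSet_Ioi).2 (ae_of_all _
      fun r hr => mul_nonneg (pow_nonneg (hc.trans hr).le _) (h0 r)))] at hfin
    exact ENNReal.mul_lt_top hκtop.lt_top hfin

open MeasureTheory Set Function Filter Real
open scoped ENNReal Topology

lemma integrableOn_inv_mul_log_rpow {q : ℝ} (hq : 1 < q) :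
    IntegrableOn (fun r : ℝ => Real.log r ^ (-q) / r) (Ioi 2) := by
  have hderiv : ∀ x ∈ Ici (2:ℝ), HasDerivAt (fun r : ℝ => (1-q)⁻¹ * Real.log r ^ (1-q))
      (Real.log x ^ (-q) / x) x := by
    intro x hx
    have hx2 : (2:ℝ) ≤ x := hx
    have hx0 : 0 < x := by linarith
    have hlog : 0 < Real.log x := Real.log_pos (by linarith)
    have h1 : HasDerivAt Real.log x⁻¹ x := Real.hasDerivAt_log hx0.ne'
    have h2 : HasDerivAt (fun y : ℝ => y ^ (1-q)) ((1-q) * Real.log x ^ (1-q-1)) (Real.log x) :=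
      Real.hasDerivAt_rpow_const (Or.inl hlog.ne')
    have h3 := (h2.comp x h1).const_mul (1-q)⁻¹
    refine h3.congr_deriv ?_
    symm
    have hne : ((1:ℝ)-q) ≠ 0 := by linarith
    have h5 : (1:ℝ) - q - 1 = -q := by ring
    rw [h5, div_eq_mul_inv, mul_assoc, inv_mul_cancel_left₀ hne]
  have hpos : ∀ x ∈ Ioi (2:ℝ), 0 ≤ Real.log x ^ (-q) / x := fun x hx =>
    div_nonneg (Real.rpow_nonneg (Real.log_nonneg (by linarith [mem_Ioi.1 hx])) _)
      (by linarith [mem_Ioi.1 hx])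
  have htend : Tendsto (fun r : ℝ => (1-q)⁻¹ * Real.log r ^ (1-q)) atTop (𝓝 ((1-q)⁻¹ * 0)) := by
    refine Tendsto.const_mul _ ?_
    have h4 : Tendsto (fun y : ℝ => y ^ (-(q-1))) atTop (𝓝 0) :=
      tendsto_rpow_neg_atTop (by linarith)
    have : (fun r : ℝ => Real.log r ^ (1-q)) = (fun y : ℝ => y ^ (-(q-1))) ∘ Real.log := by
      funext r; simp only [comp_apply]; norm_num
    rw [this]
    exact h4.comp Real.tendsto_log_atTop
  exact integrableOn_Ioi_deriv_of_nonneg' hderiv hpos htend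

lemma not_integrableOn_inv_mul_log : ¬ IntegrableOn (fun r : ℝ => (r * Real.log r)⁻¹) (Ioi 3) := by
  intro h
  set M := ∫ r in Ioi (3:ℝ), (r * Real.log r)⁻¹ with hM
  have hnn : 0 ≤ᵐ[volume.restrict (Ioi (3:ℝ))] fun r : ℝ => (r * Real.log r)⁻¹ := by
    refine (ae_restrict_iff' measurableSet_Ioi).2 (ae_of_all _ fun r hr => ?_)
    have hr3 : (3:ℝ) < r := hr
    exact inv_nonneg.2 (mul_nonneg (by linarith) (Real.log_nonneg (by linarith)))
  have key : ∀ X : ℝ, 4 ≤ X → Real.log (Real.log X) - Real.log (Real.log 3) ≤ M := by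
    intro X hX
    have h3X : (3:ℝ) ≤ X := by linarith
    have hderiv : ∀ x ∈ uIcc (3:ℝ) X, HasDerivAt (fun r => Real.log (Real.log r))
        ((x * Real.log x)⁻¹) x := by
      intro x hx
      rw [uIcc_of_le h3X] at hx
      have hx3 : (3:ℝ) ≤ x := hx.1
      have hx0 : 0 < x := by linarith
      have hlog : 0 < Real.log x := Real.log_pos (by linarith)
      have h1 : HasDerivAt Real.log x⁻¹ x := Real.hasDerivAt_log hx0.ne'
      have h2 : HasDerivAt Real.log (Real.log x)⁻¹ (Real.log x) := Real.hasDerivAt_log hlog.ne'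
      have := h2.comp x h1
      refine this.congr_deriv ?_
      symm
      rw [mul_inv]
      ring
    have hint : IntervalIntegrable (fun r : ℝ => (r * Real.log r)⁻¹) volume 3 X := by
      rw [intervalIntegrable_iff_integrableOn_Ioc_of_le h3X]
      exact h.mono_set Ioc_subset_Ioi_self
    have heq := intervalIntegral.integral_eq_sub_of_hasDerivAt hderiv hint
    rw [intervalIntegral.integral_of_le h3X] at heq
    rw [← heq]
    exact setIntegral_mono_set h hnn (HasSubset.Subset.eventuallyLE Ioc_subset_Ioi_self)
  have htends : Tendsto (fun X : ℝ => Real.log (Real.log X)) atTop atTop :=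
    Real.tendsto_log_atTop.comp Real.tendsto_log_atTop
  obtain ⟨X, hX1, hX2⟩ := ((htends.eventually_gt_atTop (M + Real.log (Real.log 3))).and
    (eventually_ge_atTop (4:ℝ))).exists
  have := key X hX2
  linarith

open Real

lemma measurable_rpow_const (c : ℝ) : Measurable fun x : ℝ => x ^ c := by measurability

lemma sq_form {A L n ρ : ℝ} (hA0 : 0 < A) (hL0 : 0 ≤ L) :
    (A ^ (-n/2) * L ^ (-ρ)) ^ 2 = A ^ (-n) * L ^ (-(2*ρ)) := by
  rw [mul_pow, ← Real.rpow_natCast (A ^ (-n/2)) 2, ← Real.rpow_natCast (L ^ (-ρ)) 2,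
    ← Real.rpow_mul hA0.le, ← Real.rpow_mul hL0]
  norm_num
  rw [mul_comm ρ 2]
  exact Or.inl rfl

lemma log_form {A L n ρ : ℝ} (hA0 : 0 < A) (hL0 : 0 < L) :
    Real.log (A ^ (-n) * L ^ (-(2*ρ))) = -(n * Real.log A + 2*ρ * Real.log L) := by
  rw [Real.log_mul (Real.rpow_pos_of_pos hA0 _).ne' (Real.rpow_pos_of_pos hL0 _).ne',
    Real.log_rpow hA0, Real.log_rpow hL0]
  ring

lemma upper_bound (d : ℕ) (hd : 1 ≤ d) {ρ r : ℝ} (hρ : 1/2 < ρ) (hr : 2 < r) :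
    r ^ (d - 1) *
      ((Real.sqrt (1 + r ^ 2) ^ (-(d:ℝ)/2) * Real.log (Real.sqrt (1 + r ^ 2)) ^ (-ρ)) ^ 2 *
        |Real.log ((Real.sqrt (1 + r ^ 2) ^ (-(d:ℝ)/2) *
          Real.log (Real.sqrt (1 + r ^ 2)) ^ (-ρ)) ^ 2)|)
    ≤ ((d:ℝ) + 2*ρ*(1 + ((Real.log 2)^2)⁻¹)) * (Real.log r ^ (-(2*ρ-1)) / r) := by
  set A := Real.sqrt (1 + r^2) with hA
  have hr0 : (0:ℝ) < r := by linarith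
  have hrA : r ≤ A := by
    have h1 : Real.sqrt (r^2) ≤ A := Real.sqrt_le_sqrt (by nlinarith)
    rwa [Real.sqrt_sq hr0.le] at h1
  have hA0 : 0 < A := lt_of_lt_of_le hr0 hrA
  have hA1 : 1 < A := by linarith
  set L := Real.log A with hL
  have hL0 : 0 < L := Real.log_pos hA1
  have hlr0 : 0 < Real.log r := Real.log_pos (by linarith)
  have hrL : Real.log r ≤ L := Real.log_le_log hr0 hrA
  have hl20 : 0 < Real.log 2 := Real.log_pos one_lt_two
  have hl2L : Real.log 2 ≤ L := le_trans (Real.log_le_log two_pos (le_of_lt hr)) hrL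
  set K := (d:ℝ) + 2*ρ*(1 + ((Real.log 2)^2)⁻¹) with hK
  have hK0 : 0 ≤ K := by
    have hd' : (1:ℝ) ≤ (d:ℝ) := by exact_mod_cast hd
    rw [hK]
    nlinarith [mul_pos (by linarith : (0:ℝ) < 2*ρ)
      (by positivity : (0:ℝ) < 1 + ((Real.log 2)^2)⁻¹)]
  rw [sq_form hA0 hL0.le, log_form hA0 hL0]
  have habs : |-((d:ℝ) * L + 2*ρ*Real.log L)| ≤ K * L := by
    rw [abs_neg]
    have h1 : |Real.log L| ≤ L + L⁻¹ := by
      rw [abs_le]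
      have hi0 : 0 < L⁻¹ := inv_pos.2 hL0
      constructor
      · have h2 := Real.log_le_sub_one_of_pos hi0
        rw [Real.log_inv] at h2
        linarith
      · have h2 := Real.log_le_sub_one_of_pos hL0
        linarith
    have h2 : L⁻¹ ≤ ((Real.log 2)^2)⁻¹ * L := by
      have key : ((Real.log 2)^2)⁻¹ * L - L⁻¹ =
          (L*L - (Real.log 2)^2) / ((Real.log 2)^2 * L) := by
        field_simp
      have h3 : (0:ℝ) ≤ (L*L - (Real.log 2)^2) / ((Real.log 2)^2 * L) :=
        div_nonneg (by nlinarith) (by positivity)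
      linarith [key ▸ h3]
    have hρ0 : (0:ℝ) ≤ 2*ρ := by linarith
    calc |(d:ℝ)*L + 2*ρ*Real.log L| ≤ (d:ℝ)*L + |2*ρ*Real.log L| := by
          have h3 := abs_add_le ((d:ℝ)*L) (2*ρ*Real.log L)
          rwa [abs_of_nonneg (by positivity : (0:ℝ) ≤ (d:ℝ)*L)] at h3
      _ = (d:ℝ)*L + 2*ρ*|Real.log L| := by rw [abs_mul, abs_of_nonneg hρ0]
      _ ≤ (d:ℝ)*L + 2*ρ*(L + ((Real.log 2)^2)⁻¹ * L) := by
          have h4 : |Real.log L| ≤ L + ((Real.log 2)^2)⁻¹ * L := le_trans h1 (by linarith)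
          nlinarith
      _ = K * L := by rw [hK]; ring
  have hE0 : (0:ℝ) ≤ A^(-(d:ℝ)) * L^(-(2*ρ)) := by positivity
  have hq : -(2*ρ-1) = -(2*ρ) + 1 := by ring
  have hA' : A^(-(d:ℝ)) ≤ r^(-(d:ℝ)) :=
    Real.rpow_le_rpow_of_nonpos hr0 hrA (neg_nonpos.2 (Nat.cast_nonneg d))
  have hLr : L^(-(2*ρ-1)) ≤ Real.log r ^ (-(2*ρ-1)) :=
    Real.rpow_le_rpow_of_nonpos hlr0 hrL (by linarith)
  have hpow : (r:ℝ)^(d-1) * r^(-(d:ℝ)) = r⁻¹ := by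
    rw [← Real.rpow_natCast r (d-1), ← Real.rpow_add hr0, Nat.cast_sub hd, Nat.cast_one,
      show ((d:ℝ)-1) + -(d:ℝ) = -1 by ring, Real.rpow_neg_one]
  calc r ^ (d - 1) * (A^(-(d:ℝ)) * L^(-(2*ρ)) * |-((d:ℝ) * L + 2*ρ*Real.log L)|)
      ≤ r ^ (d - 1) * (A^(-(d:ℝ)) * L^(-(2*ρ)) * (K * L)) := by
        have := mul_le_mul_of_nonneg_left habs hE0
        exact mul_le_mul_of_nonneg_left this (pow_nonneg hr0.le _)
    _ = K * (A^(-(d:ℝ)) * L^(-(2*ρ-1))) * r ^ (d-1) := by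
        rw [hq, Real.rpow_add hL0, Real.rpow_one]
        ring
    _ ≤ K * (r^(-(d:ℝ)) * Real.log r ^ (-(2*ρ-1))) * r ^ (d-1) := by
        have h5 : A^(-(d:ℝ)) * L^(-(2*ρ-1)) ≤ r^(-(d:ℝ)) * Real.log r ^ (-(2*ρ-1)) :=
          mul_le_mul hA' hLr (by positivity) (by positivity)
        have h6 := mul_le_mul_of_nonneg_left h5 hK0
        exact mul_le_mul_of_nonneg_right h6 (pow_nonneg hr0.le _)
    _ = K * (Real.log r ^ (-(2*ρ-1)) / r) := by
        rw [div_eq_mul_inv, ← hpow]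
        ring

lemma upper_bound_sq (d : ℕ) (hd : 1 ≤ d) {ρ r : ℝ} (hρ : 0 < ρ) (hr : 2 < r) :
    r ^ (d - 1) *
      (Real.sqrt (1 + r ^ 2) ^ (-(d:ℝ)/2) * Real.log (Real.sqrt (1 + r ^ 2)) ^ (-ρ)) ^ 2
    ≤ Real.log r ^ (-(2*ρ)) / r := by
  set A := Real.sqrt (1 + r^2) with hA
  have hr0 : (0:ℝ) < r := by linarith
  have hrA : r ≤ A := by
    have h1 : Real.sqrt (r^2) ≤ A := Real.sqrt_le_sqrt (by nlinarith)
    rwa [Real.sqrt_sq hr0.le] at h1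
  have hA0 : 0 < A := lt_of_lt_of_le hr0 hrA
  have hA1 : 1 < A := by linarith
  set L := Real.log A with hL
  have hL0 : 0 < L := Real.log_pos hA1
  have hlr0 : 0 < Real.log r := Real.log_pos (by linarith)
  have hrL : Real.log r ≤ L := Real.log_le_log hr0 hrA
  rw [sq_form hA0 hL0.le]
  have hA' : A^(-(d:ℝ)) ≤ r^(-(d:ℝ)) :=
    Real.rpow_le_rpow_of_nonpos hr0 hrA (neg_nonpos.2 (Nat.cast_nonneg d))
  have hLr : L^(-(2*ρ)) ≤ Real.log r ^ (-(2*ρ)) :=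
    Real.rpow_le_rpow_of_nonpos hlr0 hrL (by linarith)
  have hpow : (r:ℝ)^(d-1) * r^(-(d:ℝ)) = r⁻¹ := by
    rw [← Real.rpow_natCast r (d-1), ← Real.rpow_add hr0, Nat.cast_sub hd, Nat.cast_one,
      show ((d:ℝ)-1) + -(d:ℝ) = -1 by ring, Real.rpow_neg_one]
  calc r ^ (d-1) * (A^(-(d:ℝ)) * L^(-(2*ρ)))
      ≤ r ^ (d-1) * (r^(-(d:ℝ)) * Real.log r ^ (-(2*ρ))) :=
        mul_le_mul_of_nonneg_left
          (mul_le_mul hA' hLr (by positivity) (by positivity)) (pow_nonneg hr0.le _)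
    _ = Real.log r ^ (-(2*ρ)) / r := by rw [div_eq_mul_inv, ← hpow]; ring

lemma lower_bound (d : ℕ) (hd : 1 ≤ d) {ρ r : ℝ} (hρ1 : 0 < ρ) (hρ2 : ρ ≤ 1) (hr : 3 < r) :
    (Real.sqrt 2 ^ (-(d:ℝ)) * 2 ^ (-(2*ρ))) * (r * Real.log r)⁻¹ ≤
    r ^ (d - 1) *
      ((Real.sqrt (1 + r ^ 2) ^ (-(d:ℝ)/2) * Real.log (Real.sqrt (1 + r ^ 2)) ^ (-ρ)) ^ 2 *
        |Real.log ((Real.sqrt (1 + r ^ 2) ^ (-(d:ℝ)/2) *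
          Real.log (Real.sqrt (1 + r ^ 2)) ^ (-ρ)) ^ 2)|) := by
  set A := Real.sqrt (1 + r^2) with hA
  have hr0 : (0:ℝ) < r := by linarith
  have hrA : r ≤ A := by
    have h1 : Real.sqrt (r^2) ≤ A := Real.sqrt_le_sqrt (by nlinarith)
    rwa [Real.sqrt_sq hr0.le] at h1
  have hA0 : 0 < A := lt_of_lt_of_le hr0 hrA
  have hA1 : 1 < A := by linarith
  set L := Real.log A with hL
  have hL0 : 0 < L := Real.log_pos hA1
  have hlr0 : 0 < Real.log r := Real.log_pos (by linarith)
  have hrL : Real.log r ≤ L := Real.log_le_log hr0 hrA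
  have hlog3 : 1 < Real.log 3 := by
    rw [Real.lt_log_iff_exp_lt (by norm_num : (0:ℝ) < 3)]
    exact Real.exp_one_lt_d9.trans (by norm_num)
  have hlr1 : 1 ≤ Real.log r :=
    le_of_lt (lt_of_lt_of_le hlog3 (Real.log_le_log (by norm_num) hr.le))
  have hL1 : 1 ≤ L := le_trans hlr1 hrL
  have hlogL0 : 0 ≤ Real.log L := Real.log_nonneg hL1
  have hd' : (1:ℝ) ≤ (d:ℝ) := by exact_mod_cast hd
  have hAle : A ≤ Real.sqrt 2 * r := by
    have h1 : A ≤ Real.sqrt (2 * r^2) := Real.sqrt_le_sqrt (by nlinarith)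
    rwa [Real.sqrt_mul (by norm_num : (0:ℝ) ≤ 2), Real.sqrt_sq hr0.le] at h1
  have hLle : L ≤ 2 * Real.log r := by
    have h1 : L ≤ Real.log (Real.sqrt 2 * r) := Real.log_le_log hA0 hAle
    rw [Real.log_mul (Real.sqrt_pos.2 (by norm_num)).ne' hr0.ne',
      Real.log_sqrt (by norm_num : (0:ℝ) ≤ 2)] at h1
    linarith [Real.log_two_lt_d9]
  rw [sq_form hA0 hL0.le, log_form hA0 hL0]
  have habs : Real.log r ≤ |-((d:ℝ) * L + 2*ρ*Real.log L)| := by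
    rw [abs_neg, abs_of_nonneg (by nlinarith : (0:ℝ) ≤ (d:ℝ)*L + 2*ρ*Real.log L)]
    nlinarith
  have hA2 : Real.sqrt 2 ^ (-(d:ℝ)) * r ^ (-(d:ℝ)) ≤ A^(-(d:ℝ)) := by
    have h1 : (Real.sqrt 2 * r) ^ (-(d:ℝ)) ≤ A ^ (-(d:ℝ)) :=
      Real.rpow_le_rpow_of_nonpos hA0 hAle (neg_nonpos.2 (Nat.cast_nonneg d))
    rwa [Real.mul_rpow (Real.sqrt_nonneg 2) hr0.le] at h1
  have hL2 : (2:ℝ)^(-(2*ρ)) * Real.log r ^ (-(2*ρ)) ≤ L^(-(2*ρ)) := by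
    have h1 : (2 * Real.log r) ^ (-(2*ρ)) ≤ L ^ (-(2*ρ)) :=
      Real.rpow_le_rpow_of_nonpos hL0 hLle (by linarith)
    rwa [Real.mul_rpow (by norm_num : (0:ℝ) ≤ 2) hlr0.le] at h1
  have hmono : (Real.log r)⁻¹ ≤ Real.log r ^ (-(2*ρ)) * Real.log r := by
    have h1 : Real.log r ^ (-(2*ρ)) * Real.log r = Real.log r ^ (-(2*ρ)+1) := by
      nth_rewrite 2 [← Real.rpow_one (Real.log r)]
      rw [← Real.rpow_add hlr0]
    rw [h1, ← Real.rpow_neg_one (Real.log r)]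
    exact Real.rpow_le_rpow_of_exponent_le hlr1 (by linarith)
  have hpow : (r:ℝ)^(d-1) * r^(-(d:ℝ)) = r⁻¹ := by
    rw [← Real.rpow_natCast r (d-1), ← Real.rpow_add hr0, Nat.cast_sub hd, Nat.cast_one,
      show ((d:ℝ)-1) + -(d:ℝ) = -1 by ring, Real.rpow_neg_one]
  calc (Real.sqrt 2 ^ (-(d:ℝ)) * 2 ^ (-(2*ρ))) * (r * Real.log r)⁻¹
      = (Real.sqrt 2 ^ (-(d:ℝ)) * 2 ^ (-(2*ρ)) * r⁻¹) * (Real.log r)⁻¹ := by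
        rw [mul_inv]; ring
    _ ≤ (Real.sqrt 2 ^ (-(d:ℝ)) * 2 ^ (-(2*ρ)) * r⁻¹) * (Real.log r ^ (-(2*ρ)) * Real.log r) :=
        mul_le_mul_of_nonneg_left hmono (by positivity)
    _ = ((Real.sqrt 2 ^ (-(d:ℝ)) * r^(-(d:ℝ))) * ((2:ℝ)^(-(2*ρ)) * Real.log r ^ (-(2*ρ))) *
          Real.log r) * r ^ (d-1) := by
        rw [← hpow]; ring
    _ ≤ (A^(-(d:ℝ)) * L^(-(2*ρ)) * |-((d:ℝ) * L + 2*ρ*Real.log L)|) * r ^ (d-1) := by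
        refine mul_le_mul_of_nonneg_right ?_ (pow_nonneg hr0.le _)
        refine mul_le_mul (mul_le_mul hA2 hL2 (by positivity) (by positivity)) habs
          hlr0.le (by positivity)
    _ = r ^ (d - 1) * (A^(-(d:ℝ)) * L^(-(2*ρ)) * |-((d:ℝ) * L + 2*ρ*Real.log L)|) := by ring


open MeasureTheory

/-- Let `f_ρ(x) = ⟨x⟩^{-d/2}(log⟨x⟩)^{-ρ}`. If `1/2 < ρ ≤ 1` then
`∫_{|x|≥2} |f_ρ|² |log(|f_ρ|²)| = ∞`, while if `ρ > 1` this integral is finite.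
Consequently, for `1/2 < ρ ≤ 1`, the cutoff of `f_ρ` to `{|x| ≥ 2}` lies in `L²`
but `|f_ρ|² log(|f_ρ|²)` is not integrable. -/
theorem f_rho_log_integrability (d : ℕ) (hd : 1 ≤ d) (ρ : ℝ) :
    ((1/2 < ρ ∧ ρ ≤ 1) →
      ¬ MeasureTheory.IntegrableOn
          (fun x : EuclideanSpace ℝ (Fin d) =>
            (Real.sqrt (1 + ‖x‖ ^ 2) ^ (-(d:ℝ)/2) *
              Real.log (Real.sqrt (1 + ‖x‖ ^ 2)) ^ (-ρ)) ^ 2 *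
              |Real.log ((Real.sqrt (1 + ‖x‖ ^ 2) ^ (-(d:ℝ)/2) *
                Real.log (Real.sqrt (1 + ‖x‖ ^ 2)) ^ (-ρ)) ^ 2)|)
          {x : EuclideanSpace ℝ (Fin d) | 2 ≤ ‖x‖} volume) ∧
    (1 < ρ →
      MeasureTheory.IntegrableOn
          (fun x : EuclideanSpace ℝ (Fin d) =>
            (Real.sqrt (1 + ‖x‖ ^ 2) ^ (-(d:ℝ)/2) *
              Real.log (Real.sqrt (1 + ‖x‖ ^ 2)) ^ (-ρ)) ^ 2 *
              |Real.log ((Real.sqrt (1 + ‖x‖ ^ 2) ^ (-(d:ℝ)/2) *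
                Real.log (Real.sqrt (1 + ‖x‖ ^ 2)) ^ (-ρ)) ^ 2)|)
          {x : EuclideanSpace ℝ (Fin d) | 2 ≤ ‖x‖} volume) ∧
    ((1/2 < ρ ∧ ρ ≤ 1) →
      MeasureTheory.MemLp
        (fun x : EuclideanSpace ℝ (Fin d) =>
          Real.sqrt (1 + ‖x‖ ^ 2) ^ (-(d:ℝ)/2) *
            Real.log (Real.sqrt (1 + ‖x‖ ^ 2)) ^ (-ρ)) 2
        (volume.restrict {x : EuclideanSpace ℝ (Fin d) | 2 ≤ ‖x‖})) := by
  haveI : Nonempty (Fin d) := ⟨⟨0, hd⟩⟩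
  haveI : Nontrivial (EuclideanSpace ℝ (Fin d)) := inferInstance
  have hfr : Module.finrank ℝ (EuclideanSpace ℝ (Fin d)) = d := finrank_euclideanSpace_fin
  have mA : Measurable fun r : ℝ => Real.sqrt (1 + r ^ 2) :=
    (continuous_const.add (continuous_pow 2)).sqrt.measurable
  have mf : Measurable fun r : ℝ =>
      Real.sqrt (1 + r ^ 2) ^ (-(d:ℝ)/2) * Real.log (Real.sqrt (1 + r ^ 2)) ^ (-ρ) :=
    ((measurable_rpow_const _).comp mA).mul
      ((measurable_rpow_const _).comp (Real.measurable_log.comp mA))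
  have mg : Measurable fun r : ℝ =>
      (Real.sqrt (1 + r ^ 2) ^ (-(d:ℝ)/2) * Real.log (Real.sqrt (1 + r ^ 2)) ^ (-ρ)) ^ 2 *
        |Real.log ((Real.sqrt (1 + r ^ 2) ^ (-(d:ℝ)/2) *
          Real.log (Real.sqrt (1 + r ^ 2)) ^ (-ρ)) ^ 2)| :=
    (mf.pow_const 2).mul ((Real.measurable_log.comp (mf.pow_const 2)).abs)
  have key : IntegrableOn
      (fun x : EuclideanSpace ℝ (Fin d) =>
        (Real.sqrt (1 + ‖x‖ ^ 2) ^ (-(d:ℝ)/2) *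
          Real.log (Real.sqrt (1 + ‖x‖ ^ 2)) ^ (-ρ)) ^ 2 *
          |Real.log ((Real.sqrt (1 + ‖x‖ ^ 2) ^ (-(d:ℝ)/2) *
            Real.log (Real.sqrt (1 + ‖x‖ ^ 2)) ^ (-ρ)) ^ 2)|)
      {x : EuclideanSpace ℝ (Fin d) | 2 ≤ ‖x‖} volume ↔
      IntegrableOn (fun r : ℝ => r ^ (d - 1) *
        ((Real.sqrt (1 + r ^ 2) ^ (-(d:ℝ)/2) * Real.log (Real.sqrt (1 + r ^ 2)) ^ (-ρ)) ^ 2 *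
          |Real.log ((Real.sqrt (1 + r ^ 2) ^ (-(d:ℝ)/2) *
            Real.log (Real.sqrt (1 + r ^ 2)) ^ (-ρ)) ^ 2)|)) (Set.Ioi 2) volume := by
    have h := integrableOn_fun_norm_iff (E := EuclideanSpace ℝ (Fin d)) volume _ mg
      (fun r => mul_nonneg (sq_nonneg _) (abs_nonneg _)) (two_pos)
    rw [hfr] at h
    exact h
  refine ⟨?_, ?_, ?_⟩
  · rintro ⟨hρ1, hρ2⟩ h
    have h2 := key.1 h
    have h3 := h2.mono_set (Set.Ioi_subset_Ioi (by norm_num : (2:ℝ) ≤ 3))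
    set c := Real.sqrt 2 ^ (-(d:ℝ)) * (2:ℝ) ^ (-(2*ρ)) with hc
    have hc0 : 0 < c := by
      have h4 : (0:ℝ) < Real.sqrt 2 := Real.sqrt_pos.2 (by norm_num)
      exact mul_pos (Real.rpow_pos_of_pos h4 _) (Real.rpow_pos_of_pos (by norm_num) _)
    have h4 : Integrable (fun r : ℝ => c * (r * Real.log r)⁻¹)
        (volume.restrict (Set.Ioi (3:ℝ))) := by
      refine h3.mono' (measurable_const.mul
        ((measurable_id.mul Real.measurable_log).inv)).aestronglyMeasurable ?_
      refine (ae_restrict_iff' measurableSet_Ioi).2 (ae_of_all _ fun r hr => ?_)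
      have hr3 : (3:ℝ) < r := hr
      have hb := lower_bound d hd (by linarith) hρ2 hr3
      rw [Real.norm_eq_abs, abs_of_nonneg (mul_nonneg hc0.le (inv_nonneg.2 (mul_nonneg
        (by linarith) (Real.log_nonneg (by linarith)))))]
      exact hb
    have h5 : IntegrableOn (fun r : ℝ => (r * Real.log r)⁻¹) (Set.Ioi 3) volume := by
      have h6 := h4.const_mul c⁻¹
      simpa [IntegrableOn, inv_mul_cancel_left₀ hc0.ne'] using h6
    exact not_integrableOn_inv_mul_log h5
  · intro hρ
    apply key.2
    have hint : Integrable
        (fun r : ℝ => ((d:ℝ) + 2*ρ*(1 + ((Real.log 2)^2)⁻¹)) * (Real.log r ^ (-(2*ρ-1)) / r))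
        (volume.restrict (Set.Ioi (2:ℝ))) :=
      (integrableOn_inv_mul_log_rpow (q := 2*ρ-1) (by linarith)).const_mul _
    refine hint.mono' ((measurable_id.pow_const _).mul mg).aestronglyMeasurable ?_
    refine (ae_restrict_iff' measurableSet_Ioi).2 (ae_of_all _ fun r hr => ?_)
    have hr2 : (2:ℝ) < r := hr
    have hb := upper_bound d hd (by linarith : 1/2 < ρ) hr2
    rw [Real.norm_eq_abs, abs_of_nonneg (mul_nonneg (pow_nonneg (by linarith) _)
      (mul_nonneg (sq_nonneg _) (abs_nonneg _)))]
    exact hb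
  · rintro ⟨hρ1, hρ2⟩
    apply (memLp_two_iff_integrable_sq
      (mf.comp measurable_norm).aestronglyMeasurable).2
    have iff2 := integrableOn_fun_norm_iff (E := EuclideanSpace ℝ (Fin d)) volume
      (fun r : ℝ => (Real.sqrt (1 + r ^ 2) ^ (-(d:ℝ)/2) *
        Real.log (Real.sqrt (1 + r ^ 2)) ^ (-ρ)) ^ 2)
      (mf.pow_const 2) (fun r => sq_nonneg _) (two_pos)
    rw [hfr] at iff2
    apply iff2.2
    refine (integrableOn_inv_mul_log_rpow (q := 2*ρ) (by linarith)).mono'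
      ((measurable_id.pow_const _).mul (mf.pow_const 2)).aestronglyMeasurable ?_
    refine (ae_restrict_iff' measurableSet_Ioi).2 (ae_of_all _ fun r hr => ?_)
    have hr2 : (2:ℝ) < r := hr
    have hb := upper_bound_sq d hd (ρ := ρ) (by linarith) hr2
    rw [Real.norm_eq_abs, abs_of_nonneg (mul_nonneg (pow_nonneg (by linarith) _)
      (sq_nonneg _))]
    exact hb
end

section
/- Let d ≥ 1 and f_ρ(x) = ⟨x⟩^{-d/2}(log⟨x⟩)^{-ρ}. If 1 < ρ ≤ 3/2 then ∫_{|x|≥2} |f_ρ(x)|² (log(|f_ρ(x)|²))² dx = ∞, while if ρ > 3/2 this integral is finite. -/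
open MeasureTheory Set Filter Topology
open scoped ENNReal


lemma radial_lintegral (d : ℕ) (hd : 1 ≤ d) (G : ℝ → ℝ≥0∞) (hG : Measurable G) :
    ∫⁻ x : EuclideanSpace ℝ (Fin d), G ‖x‖ =
      (volume : Measure (EuclideanSpace ℝ (Fin d))).toSphere univ *
        ∫⁻ r in Ioi (0:ℝ), ENNReal.ofReal (r ^ (d-1)) * G r := by
  set E := EuclideanSpace ℝ (Fin d) with hE
  haveI : Nontrivial E := by
    have hdim : Module.finrank ℝ E = d := finrank_euclideanSpace_fin
    exact Module.nontrivial_of_finrank_pos (R := ℝ) (by rw [hdim]; omega)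
  have hdim : Module.finrank ℝ E = d := finrank_euclideanSpace_fin
  have hGm : Measurable fun p : Metric.sphere (0:E) 1 × Ioi (0:ℝ) => G p.2 :=
    hG.comp (measurable_subtype_coe.comp measurable_snd)
  have h1 : ∫⁻ x : E, G ‖x‖ ∂volume
      = ∫⁻ x : ({0}ᶜ : Set E), G ‖x.1‖ ∂((volume : Measure E).comap Subtype.val) := by
    rw [lintegral_subtype_comap (measurableSet_singleton (0:E)).compl (fun y => G ‖y‖),
      restrict_compl_singleton]
  have h2 : ∫⁻ x : ({0}ᶜ : Set E), G ‖x.1‖ ∂((volume : Measure E).comap Subtype.val)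
      = ∫⁻ p : Metric.sphere (0:E) 1 × Ioi (0:ℝ), G p.2
          ∂(((volume : Measure E).toSphere).prod
              (.volumeIoiPow (Module.finrank ℝ E - 1))) := by
    rw [← (volume : Measure E).measurePreserving_homeomorphUnitSphereProd.lintegral_comp hGm]
    exact lintegral_congr fun x => by simp
  have h3 : ∫⁻ p : Metric.sphere (0:E) 1 × Ioi (0:ℝ), G p.2
          ∂(((volume : Measure E).toSphere).prod
              (.volumeIoiPow (Module.finrank ℝ E - 1)))
      = (volume : Measure E).toSphere univ *
          ∫⁻ r : Ioi (0:ℝ), G r ∂(Measure.volumeIoiPow (Module.finrank ℝ E - 1)) := by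
    rw [lintegral_prod _ hGm.aemeasurable]
    simp [lintegral_const, mul_comm]
  have h4 : ∫⁻ r : Ioi (0:ℝ), G r ∂(Measure.volumeIoiPow (Module.finrank ℝ E - 1))
      = ∫⁻ r in Ioi (0:ℝ), ENNReal.ofReal (r ^ (d-1)) * G r := by
    have hg' : Measurable fun r : Ioi (0:ℝ) => G ↑r := hG.comp measurable_subtype_coe
    rw [Measure.volumeIoiPow, lintegral_withDensity_eq_lintegral_mul _
      ((measurable_subtype_coe.pow_const _).ennreal_ofReal) hg']
    rw [hdim]
    exact lintegral_subtype_comap measurableSet_Ioi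
      (fun r : ℝ => ENNReal.ofReal (r ^ (d-1)) * G r)
  rw [h1, h2, h3, h4]
lemma radial_integrableOn_iff (d : ℕ) (hd : 1 ≤ d) (F : ℝ → ℝ) (hF : Measurable F)
    (h0 : ∀ r, 0 ≤ F r) :
    IntegrableOn (fun x : EuclideanSpace ℝ (Fin d) => F ‖x‖) {x | 2 ≤ ‖x‖} volume ↔
      IntegrableOn (fun r : ℝ => r ^ (d-1) * F r) (Ici (2:ℝ)) volume := by
  set E := EuclideanSpace ℝ (Fin d) with hE
  haveI : Nontrivial E := by
    have hdim : Module.finrank ℝ E = d := finrank_euclideanSpace_fin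
    exact Module.nontrivial_of_finrank_pos (R := ℝ) (by rw [hdim]; omega)
  have hdim : Module.finrank ℝ E = d := finrank_euclideanSpace_fin
  have hS : MeasurableSet {x : E | 2 ≤ ‖x‖} := measurableSet_le measurable_const measurable_norm
  set c := (volume : Measure E).toSphere univ with hc
  have hc' : c = d * volume (Metric.ball (0:E) 1) := by
    rw [hc, Measure.toSphere_apply_univ, hdim]
  have hc0 : c ≠ 0 := by
    rw [hc']
    refine mul_ne_zero (by exact_mod_cast (by omega : d ≠ 0)) ?_
    exact (Metric.measure_ball_pos volume (0:E) one_pos).ne'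
  have hctop : c ≠ ∞ := by
    rw [hc']
    exact ENNReal.mul_ne_top (ENNReal.natCast_ne_top d) measure_ball_lt_top.ne
  set G := (Ici (2:ℝ)).indicator (fun r => ENNReal.ofReal (F r)) with hG
  have hGmeas : Measurable G := (hF.ennreal_ofReal).indicator measurableSet_Ici
  have key : ∫⁻ x in {x : E | 2 ≤ ‖x‖}, ENNReal.ofReal (F ‖x‖) =
      c * ∫⁻ r in Ici (2:ℝ), ENNReal.ofReal (r ^ (d-1) * F r) := by
    have ha : ∫⁻ x in {x : E | 2 ≤ ‖x‖}, ENNReal.ofReal (F ‖x‖) = ∫⁻ x : E, G ‖x‖ := by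
      rw [← lintegral_indicator hS]
      refine lintegral_congr fun x => ?_
      by_cases h : 2 ≤ ‖x‖
      · rw [indicator_of_mem (show x ∈ {x : E | 2 ≤ ‖x‖} from h), hG,
          indicator_of_mem (mem_Ici.2 h)]
      · rw [indicator_of_notMem (show x ∉ {x : E | 2 ≤ ‖x‖} from h), hG,
          indicator_of_notMem (by simpa using h)]
    have hb := radial_lintegral d hd G hGmeas
    have hinter : Ici (2:ℝ) ∩ Ioi 0 = Ici 2 :=
      inter_eq_left.2 fun r hr => (lt_of_lt_of_le two_pos hr : (0:ℝ) < r)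
    have hcgr : ∫⁻ r in Ioi (0:ℝ), ENNReal.ofReal (r ^ (d-1)) * G r =
        ∫⁻ r in Ici (2:ℝ), ENNReal.ofReal (r ^ (d-1) * F r) := by
      have hpt : ∀ r ∈ Ioi (0:ℝ), ENNReal.ofReal (r ^ (d-1)) * G r =
          (Ici (2:ℝ)).indicator (fun r => ENNReal.ofReal (r ^ (d-1) * F r)) r := by
        intro r hr
        by_cases h : r ∈ Ici (2:ℝ)
        · rw [hG, indicator_of_mem h, indicator_of_mem h,
            ENNReal.ofReal_mul (pow_nonneg hr.out.le _)]
        · rw [hG, indicator_of_notMem h, indicator_of_notMem h, mul_zero]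
      rw [setLIntegral_congr_fun measurableSet_Ioi hpt,
        lintegral_indicator measurableSet_Ici, Measure.restrict_restrict measurableSet_Ici,
        hinter]
    rw [ha, hb, hcgr]
  have hnn1 : (0 : E → ℝ) ≤ᵐ[volume.restrict {x : E | 2 ≤ ‖x‖}] fun x : E => F ‖x‖ :=
    ae_of_all _ fun x => h0 _
  have hnn2 : (0 : ℝ → ℝ) ≤ᵐ[volume.restrict (Ici (2:ℝ))] fun r : ℝ => r ^ (d-1) * F r := by
    refine (ae_restrict_iff' measurableSet_Ici).2 (ae_of_all _ fun r hr => ?_)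
    exact mul_nonneg (pow_nonneg (le_trans (by norm_num) hr) _) (h0 r)
  have hm1 : AEStronglyMeasurable (fun x : E => F ‖x‖)
      (volume.restrict {x : E | 2 ≤ ‖x‖}) :=
    (hF.comp measurable_norm).aestronglyMeasurable
  have hm2 : AEStronglyMeasurable (fun r : ℝ => r ^ (d-1) * F r)
      (volume.restrict (Ici (2:ℝ))) :=
    ((measurable_id.pow_const _).mul hF).aestronglyMeasurable
  constructor
  · rintro ⟨-, hfi⟩
    refine ⟨hm2, ?_⟩
    rw [hasFiniteIntegral_iff_ofReal hnn1, key] at hfi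
    rw [hasFiniteIntegral_iff_ofReal hnn2]
    by_contra h
    rw [not_lt, top_le_iff] at h
    rw [h, ENNReal.mul_top hc0] at hfi
    exact (lt_irrefl _ hfi).elim
  · rintro ⟨-, hfi⟩
    refine ⟨hm1, ?_⟩
    rw [hasFiniteIntegral_iff_ofReal hnn2] at hfi
    rw [hasFiniteIntegral_iff_ofReal hnn1, key]
    exact ENNReal.mul_lt_top hctop.lt_top hfi

noncomputable def auxF (d : ℕ) (ρ : ℝ) (r : ℝ) : ℝ :=
  (Real.sqrt (1 + r ^ 2) ^ (-(d:ℝ)/2) * Real.log (Real.sqrt (1 + r ^ 2)) ^ (-ρ)) ^ 2 *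
    (Real.log ((Real.sqrt (1 + r ^ 2) ^ (-(d:ℝ)/2) *
      Real.log (Real.sqrt (1 + r ^ 2)) ^ (-ρ)) ^ 2)) ^ 2

lemma auxF_nonneg (d : ℕ) (ρ r : ℝ) : 0 ≤ auxF d ρ r :=
  mul_nonneg (sq_nonneg _) (sq_nonneg _)

lemma auxF_meas (d : ℕ) (ρ : ℝ) : Measurable (auxF d ρ) := by
  have m1 : Measurable fun r : ℝ => Real.sqrt (1 + r ^ 2) :=
    ((continuous_const.add (continuous_pow 2)).sqrt).measurable
  have mr : ∀ c : ℝ, Measurable fun x : ℝ => x ^ c := fun c => by fun_prop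
  have m2 : Measurable fun r : ℝ => Real.sqrt (1 + r ^ 2) ^ (-(d:ℝ)/2) :=
    (mr _).comp m1
  have m3 : Measurable fun r : ℝ => Real.log (Real.sqrt (1 + r ^ 2)) ^ (-ρ) :=
    (mr _).comp (Real.measurable_log.comp m1)
  exact ((m2.mul m3).pow_const 2).mul
    ((Real.measurable_log.comp ((m2.mul m3).pow_const 2)).pow_const 2)

lemma sqrt_one_lt {r : ℝ} (hr : 1 ≤ r) : 1 < Real.sqrt (1 + r ^ 2) := by
  have : (1:ℝ) = Real.sqrt 1 := Real.sqrt_one.symm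
  rw [this]
  exact Real.sqrt_lt_sqrt (by norm_num) (by nlinarith)

lemma auxF_eq (d : ℕ) (ρ : ℝ) {r : ℝ} (hr : 1 ≤ r) :
    auxF d ρ r = Real.sqrt (1 + r ^ 2) ^ (-(d:ℝ)) *
      Real.log (Real.sqrt (1 + r ^ 2)) ^ (-(2*ρ)) *
      ((d : ℝ) * Real.log (Real.sqrt (1 + r ^ 2)) +
        2 * ρ * Real.log (Real.log (Real.sqrt (1 + r ^ 2)))) ^ 2 := by
  set s := Real.sqrt (1 + r ^ 2) with hs
  have hs1 : 1 < s := sqrt_one_lt hr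
  have hs0 : 0 < s := lt_trans one_pos hs1
  have hL : 0 < Real.log s := Real.log_pos hs1
  have e1 : (s ^ (-(d:ℝ)/2)) ^ 2 = s ^ (-(d:ℝ)) := by
    rw [← Real.rpow_natCast (s ^ (-(d:ℝ)/2)) 2, ← Real.rpow_mul hs0.le]
    norm_num
  have e2 : (Real.log s ^ (-ρ)) ^ 2 = Real.log s ^ (-(2*ρ)) := by
    rw [← Real.rpow_natCast (Real.log s ^ (-ρ)) 2, ← Real.rpow_mul hL.le]
    ring_nf
  have e3 : Real.log ((s ^ (-(d:ℝ)/2) * Real.log s ^ (-ρ)) ^ 2) =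
      -((d:ℝ) * Real.log s + 2 * ρ * Real.log (Real.log s)) := by
    rw [Real.log_pow, Real.log_mul (Real.rpow_pos_of_pos hs0 _).ne'
      (Real.rpow_pos_of_pos hL _).ne', Real.log_rpow hs0, Real.log_rpow hL]
    push_cast
    ring
  unfold auxF
  rw [← hs, e3, mul_pow, e1, e2, neg_sq]
lemma auxF_upper (d : ℕ) (hd : 1 ≤ d) (ρ : ℝ) (hρ : 3/2 < ρ) {r : ℝ} (hr : 3 ≤ r) :
    r ^ (d-1) * auxF d ρ r ≤ ((d:ℝ) + 2*ρ)^2 * (Real.log r ^ (2-2*ρ) * r⁻¹) := by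
  have hr1 : (1:ℝ) ≤ r := by linarith
  have hr0 : (0:ℝ) < r := by linarith
  set s := Real.sqrt (1 + r ^ 2) with hs
  have hs1 : 1 < s := sqrt_one_lt hr1
  have hs0 : 0 < s := by linarith
  have hrs : r ≤ s := by
    have h := Real.sqrt_le_sqrt (show r^2 ≤ 1 + r^2 by nlinarith)
    rwa [Real.sqrt_sq hr0.le] at h
  have hL0 : 0 < Real.log s := Real.log_pos hs1
  have hlogr1 : 1 ≤ Real.log r := by
    rw [Real.le_log_iff_exp_le hr0]
    calc Real.exp 1 ≤ 2.7182818286 := Real.exp_one_lt_d9.le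
    _ ≤ r := by linarith
  have hlogr0 : 0 < Real.log r := by linarith
  have hLr : Real.log r ≤ Real.log s := Real.log_le_log hr0 hrs
  set L := Real.log s with hLdef
  have hL1 : 1 ≤ L := le_trans hlogr1 hLr
  have hlogL : Real.log L ≤ L := (Real.log_le_sub_one_of_pos hL0).trans (by linarith)
  have hlogL0 : 0 ≤ Real.log L := Real.log_nonneg hL1
  set B := (d:ℝ) * L + 2*ρ*Real.log L with hBdef
  have hB0 : 0 ≤ B :=
    add_nonneg (mul_nonneg (Nat.cast_nonneg d) (by linarith))
      (mul_nonneg (by linarith) hlogL0)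
  have hBle : B ≤ ((d:ℝ) + 2*ρ) * L := by
    have h2 : 2*ρ*Real.log L ≤ 2*ρ*L := mul_le_mul_of_nonneg_left hlogL (by linarith)
    nlinarith
  have hB2 : B^2 ≤ ((d:ℝ) + 2*ρ)^2 * L^2 := by
    have h := pow_le_pow_left₀ hB0 hBle 2
    rwa [mul_pow] at h
  have e4 : L ^ (-(2*ρ)) * L^2 = L ^ (2-2*ρ) := by
    rw [← Real.rpow_natCast L 2, ← Real.rpow_add hL0]
    norm_num
    rw [show -(2*ρ) + 2 = 2 - 2*ρ by ring]
  have t2 : s ^ (-(d:ℝ)) ≤ r ^ (-(d:ℝ)) :=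
    Real.rpow_le_rpow_of_nonpos hr0 hrs (neg_nonpos.2 (Nat.cast_nonneg d))
  have t3 : L ^ (2-2*ρ) ≤ Real.log r ^ (2-2*ρ) :=
    Real.rpow_le_rpow_of_nonpos hlogr0 hLr (by linarith)
  have er : r ^ (-(d:ℝ)) * r ^ (d-1) = r⁻¹ := by
    rw [← Real.rpow_natCast r (d-1), ← Real.rpow_add hr0, Nat.cast_sub hd]
    rw [show -(d:ℝ) + ((d:ℝ) - (1:ℕ)) = -1 by push_cast; ring, Real.rpow_neg_one]
  calc r ^ (d-1) * auxF d ρ r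
      = r ^ (d-1) * (s ^ (-(d:ℝ)) * (L ^ (-(2*ρ)) * B^2)) := by
        rw [auxF_eq d ρ hr1, ← hs, ← hLdef, ← hBdef]; ring
    _ ≤ r ^ (d-1) * (r ^ (-(d:ℝ)) * (L ^ (-(2*ρ)) * (((d:ℝ) + 2*ρ)^2 * L^2))) := by
        apply mul_le_mul_of_nonneg_left _ (pow_nonneg hr0.le _)
        apply mul_le_mul t2
          (mul_le_mul_of_nonneg_left hB2 (Real.rpow_nonneg (by linarith) _))
          (mul_nonneg (Real.rpow_nonneg (by linarith) _) (sq_nonneg _))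
          (Real.rpow_nonneg hr0.le _)
    _ = ((d:ℝ) + 2*ρ)^2 * L ^ (2-2*ρ) * (r ^ (-(d:ℝ)) * r ^ (d-1)) := by
        rw [← e4]; ring
    _ ≤ ((d:ℝ) + 2*ρ)^2 * Real.log r ^ (2-2*ρ) * (r ^ (-(d:ℝ)) * r ^ (d-1)) := by
        apply mul_le_mul_of_nonneg_right (mul_le_mul_of_nonneg_left t3 (sq_nonneg _))
        exact mul_nonneg (Real.rpow_nonneg hr0.le _) (pow_nonneg hr0.le _)
    _ = ((d:ℝ) + 2*ρ)^2 * (Real.log r ^ (2-2*ρ) * r⁻¹) := by rw [er]; ring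

lemma auxF_lower (d : ℕ) (hd : 1 ≤ d) (ρ : ℝ) (hρ1 : 1 < ρ) (hρ2 : ρ ≤ 3/2) {r : ℝ}
    (hr : 3 ≤ r) :
    ((2:ℝ)^(d+1))⁻¹ * (r * Real.log r)⁻¹ ≤ r ^ (d-1) * auxF d ρ r := by
  have hr1 : (1:ℝ) ≤ r := by linarith
  have hr0 : (0:ℝ) < r := by linarith
  set s := Real.sqrt (1 + r ^ 2) with hs
  have hs1 : 1 < s := sqrt_one_lt hr1
  have hs0 : 0 < s := by linarith
  have hrs : r ≤ s := by
    have h := Real.sqrt_le_sqrt (show r^2 ≤ 1 + r^2 by nlinarith)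
    rwa [Real.sqrt_sq hr0.le] at h
  have hs2r : s ≤ 2*r := by
    have h := Real.sqrt_le_sqrt (show 1 + r^2 ≤ (2*r)^2 by nlinarith)
    rwa [Real.sqrt_sq (by linarith)] at h
  have hL0 : 0 < Real.log s := Real.log_pos hs1
  have hlogr1 : 1 ≤ Real.log r := by
    rw [Real.le_log_iff_exp_le hr0]
    calc Real.exp 1 ≤ 2.7182818286 := Real.exp_one_lt_d9.le
    _ ≤ r := by linarith
  have hlogr0 : 0 < Real.log r := by linarith
  have hLr : Real.log r ≤ Real.log s := Real.log_le_log hr0 hrs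
  set L := Real.log s with hLdef
  have hL1 : 1 ≤ L := le_trans hlogr1 hLr
  have hlogL0 : 0 ≤ Real.log L := Real.log_nonneg hL1
  have hL2logr : L ≤ 2 * Real.log r := by
    have h1 : L ≤ Real.log (2*r) := Real.log_le_log hs0 hs2r
    have h2 : Real.log (2*r) = Real.log 2 + Real.log r :=
      Real.log_mul two_ne_zero hr0.ne'
    have h3 : Real.log 2 ≤ 1 := by
      have := Real.log_two_lt_d9
      linarith
    linarith
  set B := (d:ℝ) * L + 2*ρ*Real.log L with hBdef
  have hBge : L ≤ B := by
    have h1 : L ≤ (d:ℝ) * L := by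
      have : (1:ℝ) ≤ (d:ℝ) := by exact_mod_cast hd
      nlinarith
    nlinarith
  have hB2 : L^2 ≤ B^2 := pow_le_pow_left₀ (by linarith) hBge 2
  have e4 : L ^ (-(2*ρ)) * L^2 = L ^ (2-2*ρ) := by
    rw [← Real.rpow_natCast L 2, ← Real.rpow_add hL0]
    norm_num
    rw [show -(2*ρ) + 2 = 2 - 2*ρ by ring]
  have t2 : (2*r) ^ (-(d:ℝ)) ≤ s ^ (-(d:ℝ)) :=
    Real.rpow_le_rpow_of_nonpos hs0 hs2r (neg_nonpos.2 (Nat.cast_nonneg d))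
  have t3 : L ^ (-1:ℝ) ≤ L ^ (2-2*ρ) :=
    Real.rpow_le_rpow_of_exponent_le hL1 (by linarith)
  have t4 : (2*Real.log r)⁻¹ ≤ L⁻¹ := by
    apply inv_anti₀ hL0 hL2logr
  have t5 : (2*Real.log r)⁻¹ ≤ L ^ (-(2*ρ)) * L^2 := by
    rw [e4]
    calc (2*Real.log r)⁻¹ ≤ L⁻¹ := t4
    _ = L ^ (-1:ℝ) := (Real.rpow_neg_one L).symm
    _ ≤ L ^ (2-2*ρ) := t3
  have eq_alg : r ^ (d-1) * ((2*r) ^ (-(d:ℝ)) * (2*Real.log r)⁻¹) =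
      ((2:ℝ)^(d+1))⁻¹ * (r * Real.log r)⁻¹ := by
    rw [Real.rpow_neg (by linarith), Real.rpow_natCast]
    have hde : r ^ d = r ^ (d-1) * r := by
      conv_lhs => rw [show d = (d-1)+1 from (Nat.succ_pred_eq_of_pos hd).symm]
      rw [pow_succ]
    have h1 : r ≠ 0 := hr0.ne'
    have h2 : Real.log r ≠ 0 := hlogr0.ne'
    have h3 : r ^ (d-1) ≠ 0 := pow_ne_zero _ h1
    rw [mul_pow, hde]
    rw [pow_succ]
    field_simp
  calc ((2:ℝ)^(d+1))⁻¹ * (r * Real.log r)⁻¹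
      = r ^ (d-1) * ((2*r) ^ (-(d:ℝ)) * (2*Real.log r)⁻¹) := eq_alg.symm
    _ ≤ r ^ (d-1) * (s ^ (-(d:ℝ)) * (L ^ (-(2*ρ)) * L^2)) := by
        apply mul_le_mul_of_nonneg_left _ (pow_nonneg hr0.le _)
        apply mul_le_mul t2 t5 (by positivity) (Real.rpow_nonneg hs0.le _)
    _ ≤ r ^ (d-1) * (s ^ (-(d:ℝ)) * (L ^ (-(2*ρ)) * B^2)) := by
        apply mul_le_mul_of_nonneg_left _ (pow_nonneg hr0.le _)
        apply mul_le_mul_of_nonneg_left _ (Real.rpow_nonneg hs0.le _)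
        exact mul_le_mul_of_nonneg_left hB2 (Real.rpow_nonneg (by linarith) _)
    _ = r ^ (d-1) * auxF d ρ r := by
        rw [auxF_eq d ρ hr1, ← hs, ← hLdef, ← hBdef]; ring

lemma not_integrable_inv_mul_log :
    ¬ IntegrableOn (fun r : ℝ => (r * Real.log r)⁻¹) (Ioi 3) volume := by
  intro h
  have hderiv : ∀ x ∈ Ioi (3:ℝ),
      HasDerivAt (fun y => Real.log (Real.log y)) ((x * Real.log x)⁻¹) x := by
    intro x hx
    have hx3 : (3:ℝ) < x := hx
    have hx0 : (0:ℝ) < x := by linarith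
    have hlx : Real.log x ≠ 0 := (Real.log_pos (by linarith)).ne'
    have h1 : HasDerivAt Real.log x⁻¹ x := Real.hasDerivAt_log hx0.ne'
    have h2 := h1.log hlx
    convert h2 using 1
    rw [mul_inv, div_eq_mul_inv]
  have hlim := tendsto_limUnder_of_hasDerivAt_of_integrableOn_Ioi hderiv h
  have htop : Tendsto (fun y => Real.log (Real.log y)) atTop atTop :=
    Real.tendsto_log_atTop.comp Real.tendsto_log_atTop
  exact not_tendsto_nhds_of_tendsto_atTop htop _ hlim

lemma integrable_log_rpow_inv (ρ : ℝ) (hρ : 3/2 < ρ) :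
    IntegrableOn (fun r : ℝ => Real.log r ^ (2-2*ρ) * r⁻¹) (Ioi 3) volume := by
  have hne : (3 - 2*ρ) ≠ 0 := by linarith
  apply integrableOn_Ioi_deriv_of_nonneg' (l := 0)
    (g := fun x => Real.log x ^ (3-2*ρ) / (3-2*ρ))
  · intro x hx
    have hx3 : (3:ℝ) ≤ x := hx
    have hx0 : (0:ℝ) < x := by linarith
    have hlx : Real.log x ≠ 0 := (Real.log_pos (by linarith)).ne'
    have h1 : HasDerivAt Real.log x⁻¹ x := Real.hasDerivAt_log hx0.ne'
    have h2 : HasDerivAt (fun u : ℝ => u ^ (3-2*ρ))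
        ((3-2*ρ) * Real.log x ^ (3-2*ρ-1)) (Real.log x) :=
      Real.hasDerivAt_rpow_const (Or.inl hlx)
    have h3 := (h2.comp x h1).div_const (3-2*ρ)
    refine h3.congr_deriv ?_
    rw [show 3-2*ρ-1 = 2-2*ρ by ring]
    field_simp
  · intro x hx
    have hx3 : (3:ℝ) < x := hx
    have hlx : 0 ≤ Real.log x := Real.log_nonneg (by linarith)
    exact mul_nonneg (Real.rpow_nonneg hlx _) (by positivity)
  · have h1 : Tendsto (fun x : ℝ => x ^ (3-2*ρ)) atTop (𝓝 0) := by
      rw [show 3-2*ρ = -(2*ρ-3) by ring]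
      exact tendsto_rpow_neg_atTop (by linarith)
    have h2 := (h1.comp Real.tendsto_log_atTop).div_const (3-2*ρ)
    simpa using h2
lemma auxF_contOn (d : ℕ) (ρ : ℝ) : ContinuousOn (auxF d ρ) (Ici 2) := by
  have hsqrt : Continuous fun r : ℝ => Real.sqrt (1 + r ^ 2) :=
    (continuous_const.add (continuous_pow 2)).sqrt
  have hpos : ∀ r ∈ Ici (2:ℝ), 0 < Real.sqrt (1 + r ^ 2) := fun r hr => by positivity
  have hlogpos : ∀ r ∈ Ici (2:ℝ), 0 < Real.log (Real.sqrt (1 + r ^ 2)) :=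
    fun r hr => Real.log_pos (sqrt_one_lt (by linarith [mem_Ici.1 hr]))
  have c1 : ContinuousOn (fun r : ℝ => Real.sqrt (1 + r ^ 2) ^ (-(d:ℝ)/2)) (Ici 2) :=
    hsqrt.continuousOn.rpow_const fun r hr => Or.inl (hpos r hr).ne'
  have c2 : ContinuousOn (fun r : ℝ => Real.log (Real.sqrt (1 + r ^ 2)) ^ (-ρ)) (Ici 2) :=
    (hsqrt.continuousOn.log fun r hr => (hpos r hr).ne').rpow_const
      fun r hr => Or.inl (hlogpos r hr).ne'
  have cA : ContinuousOn (fun r : ℝ => (Real.sqrt (1 + r ^ 2) ^ (-(d:ℝ)/2) *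
      Real.log (Real.sqrt (1 + r ^ 2)) ^ (-ρ)) ^ 2) (Ici 2) := (c1.mul c2).pow 2
  have hAne : ∀ r ∈ Ici (2:ℝ), (Real.sqrt (1 + r ^ 2) ^ (-(d:ℝ)/2) *
      Real.log (Real.sqrt (1 + r ^ 2)) ^ (-ρ)) ^ 2 ≠ 0 := fun r hr =>
    pow_ne_zero _ (mul_ne_zero (Real.rpow_pos_of_pos (hpos r hr) _).ne'
      (Real.rpow_pos_of_pos (hlogpos r hr) _).ne')
  exact cA.mul ((cA.log hAne).pow 2)

lemma oneD_conv (d : ℕ) (hd : 1 ≤ d) (ρ : ℝ) (hρ : 3/2 < ρ) :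
    IntegrableOn (fun r : ℝ => r ^ (d-1) * auxF d ρ r) (Ici 2) volume := by
  rw [← Icc_union_Ioi_eq_Ici (show (2:ℝ) ≤ 3 by norm_num)]
  apply IntegrableOn.union
  · exact (((continuous_pow (d-1)).continuousOn).mul
      ((auxF_contOn d ρ).mono Icc_subset_Ici_self)).integrableOn_compact isCompact_Icc
  · apply Integrable.mono' (((integrable_log_rpow_inv ρ hρ).const_mul (((d:ℝ) + 2*ρ)^2)))
    · exact ((measurable_id.pow_const (d-1)).mul (auxF_meas d ρ)).aestronglyMeasurable
    · refine (ae_restrict_iff' measurableSet_Ioi).2 (ae_of_all _ fun r hr => ?_)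
      have hr3 : (3:ℝ) ≤ r := le_of_lt hr
      rw [Real.norm_eq_abs, abs_of_nonneg (mul_nonneg (pow_nonneg (by linarith) _)
        (auxF_nonneg d ρ r))]
      exact auxF_upper d hd ρ hρ hr3

lemma oneD_div (d : ℕ) (hd : 1 ≤ d) (ρ : ℝ) (hρ1 : 1 < ρ) (hρ2 : ρ ≤ 3/2) :
    ¬ IntegrableOn (fun r : ℝ => r ^ (d-1) * auxF d ρ r) (Ici 2) volume := by
  intro h
  have h3 : IntegrableOn (fun r : ℝ => r ^ (d-1) * auxF d ρ r) (Ioi 3) volume :=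
    h.mono_set fun r hr => le_trans (by norm_num : (2:ℝ) ≤ 3) (le_of_lt hr)
  have hint : IntegrableOn (fun r : ℝ => ((2:ℝ)^(d+1))⁻¹ * (r * Real.log r)⁻¹)
      (Ioi 3) volume := by
    apply Integrable.mono' h3
    · exact (((measurable_id.mul Real.measurable_log).inv).const_mul
        _).aestronglyMeasurable
    · refine (ae_restrict_iff' measurableSet_Ioi).2 (ae_of_all _ fun r hr => ?_)
      have hr3 : (3:ℝ) ≤ r := le_of_lt hr
      have hlr : 0 < Real.log r := Real.log_pos (by linarith)
      have h0 : 0 ≤ ((2:ℝ)^(d+1))⁻¹ * (r * Real.log r)⁻¹ := by positivity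
      rw [Real.norm_eq_abs, abs_of_nonneg h0]
      exact auxF_lower d hd ρ hρ1 hρ2 hr3
  apply not_integrable_inv_mul_log
  refine (hint.const_mul ((2:ℝ)^(d+1))).congr (ae_of_all _ fun r => ?_)
  show (2:ℝ)^(d+1) * (((2:ℝ)^(d+1))⁻¹ * (r * Real.log r)⁻¹) = (r * Real.log r)⁻¹
  rw [← mul_assoc, mul_inv_cancel₀ (by positivity), one_mul]

/-- Let `f_ρ(x) = ⟨x⟩^{-d/2}(log⟨x⟩)^{-ρ}`. If `1 < ρ ≤ 3/2` then
`∫_{|x|≥2} |f_ρ|² (log(|f_ρ|²))² = ∞`, while if `ρ > 3/2` this integral is finite. -/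
theorem f_rho_log_sq_integrability (d : ℕ) (hd : 1 ≤ d) (ρ : ℝ) :
    ((1 < ρ ∧ ρ ≤ 3/2) →
      ¬ MeasureTheory.IntegrableOn
          (fun x : EuclideanSpace ℝ (Fin d) =>
            (Real.sqrt (1 + ‖x‖ ^ 2) ^ (-(d:ℝ)/2) *
              Real.log (Real.sqrt (1 + ‖x‖ ^ 2)) ^ (-ρ)) ^ 2 *
              (Real.log ((Real.sqrt (1 + ‖x‖ ^ 2) ^ (-(d:ℝ)/2) *
                Real.log (Real.sqrt (1 + ‖x‖ ^ 2)) ^ (-ρ)) ^ 2)) ^ 2)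
          {x : EuclideanSpace ℝ (Fin d) | 2 ≤ ‖x‖} volume) ∧
    (3/2 < ρ →
      MeasureTheory.IntegrableOn
          (fun x : EuclideanSpace ℝ (Fin d) =>
            (Real.sqrt (1 + ‖x‖ ^ 2) ^ (-(d:ℝ)/2) *
              Real.log (Real.sqrt (1 + ‖x‖ ^ 2)) ^ (-ρ)) ^ 2 *
              (Real.log ((Real.sqrt (1 + ‖x‖ ^ 2) ^ (-(d:ℝ)/2) *
                Real.log (Real.sqrt (1 + ‖x‖ ^ 2)) ^ (-ρ)) ^ 2)) ^ 2)
          {x : EuclideanSpace ℝ (Fin d) | 2 ≤ ‖x‖} volume) := by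
  have key := radial_integrableOn_iff d hd (auxF d ρ) (auxF_meas d ρ) (auxF_nonneg d ρ)
  constructor
  · rintro ⟨hρ1, hρ2⟩ hInt
    exact oneD_div d hd ρ hρ1 hρ2 (key.1 hInt)
  · intro hρ
    exact key.2 (oneD_conv d hd ρ hρ)
end
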